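/- arXiv:1908.08762 — 9 statements merged into one kernel-verified Lean document; each statement's English description precedes it below -/
import Mathlib

section
/- Let Δ_1,...,Δ_n be independent {0,1}-valued random variables with P(Δ_i = 1) = p_i and P(Δ_i = 0) = q_i = 1 − p_i, where p_i ≤ 1/2 for every i. Let ξ_1 = Σ_{i=1}^n Δ_i and ξ_2 = n − ξ_1, and let C be a positive integer with P(ξ_1 < C and ξ_2 < C) > 0. Then for every integer x with max(n/2, n − C) ≤ x < C, one has P(ξ_1 = x | ξ_1 < C, ξ_2 < C) ≤ P(ξ_2 = x | ξ_1 < C, ξ_2 < C). -/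
/-!
If `x < C` and `n - x < C`, both events `ξ₁ = x` and `ξ₂ = x` lie inside the conditioning
event; otherwise the left-hand side vanishes. So it suffices that `P(ξ₁ = k) ≤ P(ξ₁ = m)` when
`m ≤ k` and `k + m = n` (here `k = x`, `m = n - x`). Write `P(ξ₁ = k)` as the sum, over the `k`-sets `A` of successes, of
`w(A) = ∏_{i ∈ A} p_i ∏_{i ∉ A} q_i`; since `p_i ≤ q_i`, `w` is antitone in `A`. Counting each
pair of disjoint `m`-sets `(E, B)` once from `E` and once from `B` (each has `C(k, m)` partners)
gives `C(k, m) ∑_E w(Eᶜ) ≤ C(k, m) ∑_B w(B)`, and `E ↦ Eᶜ` is a bijection from `m`-sets to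
`k`-sets.
-/

open MeasureTheory ProbabilityTheory Finset
open scoped ENNReal

section OutcomeWeight

variable {ι : Type*} [Fintype ι] [DecidableEq ι]

noncomputable def outcomeWeight (p q : ι → ℝ≥0∞) (A : Finset ι) : ℝ≥0∞ :=
  (∏ i ∈ A, p i) * ∏ i ∈ Aᶜ, q i

variable {p q : ι → ℝ≥0∞}

lemma outcomeWeight_anti (hpq : p ≤ q) {A B : Finset ι} (hBA : B ⊆ A) :
    outcomeWeight p q A ≤ outcomeWeight p q B := by
  have hsplit_p : ∏ i ∈ A, p i = (∏ i ∈ A \ B, p i) * ∏ i ∈ B, p i := (prod_sdiff hBA).symm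
  have hsplit_q : ∏ i ∈ Bᶜ, q i = (∏ i ∈ A \ B, q i) * ∏ i ∈ Aᶜ, q i := by
    rw [← compl_sdiff_compl, prod_sdiff (compl_subset_compl.2 hBA)]
  calc outcomeWeight p q A = (∏ i ∈ B, p i) * ((∏ i ∈ A \ B, p i) * ∏ i ∈ Aᶜ, q i) := by
        rw [outcomeWeight, hsplit_p]; ring
    _ ≤ (∏ i ∈ B, p i) * ((∏ i ∈ A \ B, q i) * ∏ i ∈ Aᶜ, q i) := by
        gcongr with i; exact hpq i
    _ = outcomeWeight p q B := by rw [outcomeWeight, hsplit_q]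

lemma sum_outcomeWeight_powersetCard_le (hpq : p ≤ q) {k m : ℕ} (hmk : m ≤ k)
    (hcard : k + m = Fintype.card ι) :
    ∑ A ∈ powersetCard k univ, outcomeWeight p q A ≤
      ∑ B ∈ powersetCard m univ, outcomeWeight p q B := by
  have hcompl_card : ∀ E ∈ powersetCard m (univ : Finset ι), #Eᶜ = k := fun E hE => by
    rw [card_compl, (mem_powersetCard.1 hE).2]; omega
  have hchoose : (k.choose m : ℝ≥0∞) ≠ 0 := by exact_mod_cast (Nat.choose_pos hmk).ne'
  rw [← ENNReal.mul_le_mul_iff_right hchoose (ENNReal.natCast_ne_top _)]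
  calc (k.choose m : ℝ≥0∞) * ∑ A ∈ powersetCard k univ, outcomeWeight p q A
      = ∑ E ∈ powersetCard m univ, ∑ _B ∈ powersetCard m Eᶜ, outcomeWeight p q Eᶜ := by
        rw [mul_sum]
        symm
        refine sum_nbij' compl compl (fun E hE => ?_) (fun A hA => ?_) (fun E _ => compl_compl E)
          (fun A _ => compl_compl A) fun E hE => ?_
        · simpa using hcompl_card E hE
        · simp only [mem_powersetCard, subset_univ, true_and] at hA ⊢
          rw [card_compl]; omega
        · rw [sum_const, card_powersetCard, hcompl_card E hE, nsmul_eq_mul]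
    _ ≤ ∑ E ∈ powersetCard m univ, ∑ B ∈ powersetCard m Eᶜ, outcomeWeight p q B := by
        gcongr with E _ B hB
        exact outcomeWeight_anti hpq (mem_powersetCard.1 hB).1
    _ = ∑ B ∈ powersetCard m univ, ∑ _E ∈ powersetCard m Bᶜ, outcomeWeight p q B := by
        refine sum_comm' fun E B => ?_
        simp only [mem_powersetCard, subset_univ, true_and, subset_compl_comm (s := B)]
        tauto
    _ = (k.choose m : ℝ≥0∞) * ∑ B ∈ powersetCard m univ, outcomeWeight p q B := by
        rw [mul_sum]
        refine sum_congr rfl fun B hB => ?_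
        rw [sum_const, card_powersetCard, hcompl_card B hB, nsmul_eq_mul]

end OutcomeWeight

lemma measurableSet_ite_singleton_compl {β : Type*} [MeasurableSpace β]
    [MeasurableSingletonClass β] (c : Prop) [Decidable c] (b : β) :
    MeasurableSet (if c then {b} else ({b}ᶜ : Set β)) := by
  split_ifs
  exacts [measurableSet_singleton b, (measurableSet_singleton b).compl]

lemma sum_eq_card_filter_eq_one {ι : Type*} [Fintype ι] {f : ι → ℝ} (hf : ∀ i, f i = 0 ∨ f i = 1) :
    ∑ i, f i = #(univ.filter fun i => f i = 1) := by
  rw [← sum_boole]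
  refine sum_congr rfl fun i _ => ?_
  rcases hf i with h | h <;> simp [h]

section Bernoulli

variable {ι Ω β : Type*} [Fintype ι] [DecidableEq ι] [DecidableEq β] {Δ : ι → Ω → β}

lemma setOf_filter_eq_eq_iInter (b : β) (A : Finset ι) :
    {ω | univ.filter (fun i => Δ i ω = b) = A} =
      ⋂ i, Δ i ⁻¹' (if i ∈ A then {b} else {b}ᶜ) := by
  ext ω
  simp only [Set.mem_ofPred_eq, Set.mem_iInter, Set.mem_preimage, Finset.ext_iff, mem_filter,
    mem_univ, true_and]
  refine forall_congr' fun i => ?_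
  split_ifs with hi <;> simp [hi]

variable [MeasurableSpace Ω] {P : Measure Ω} [MeasurableSpace β] [MeasurableSingletonClass β]

lemma measurableSet_setOf_filter_eq_eq (hmeas : ∀ i, Measurable (Δ i)) (b : β) (A : Finset ι) :
    MeasurableSet {ω | univ.filter (fun i => Δ i ω = b) = A} := by
  rw [setOf_filter_eq_eq_iInter]
  exact .iInter fun i => hmeas i (measurableSet_ite_singleton_compl _ b)

lemma measure_setOf_filter_eq_eq (hindep : iIndepFun Δ P) (b : β) (A : Finset ι) :
    P {ω | univ.filter (fun i => Δ i ω = b) = A} =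
      outcomeWeight (fun i => P {ω | Δ i ω = b}) (fun i => P {ω | Δ i ω ≠ b}) A := by
  rw [setOf_filter_eq_eq_iInter,
    hindep.meas_iInter fun i => ⟨_, measurableSet_ite_singleton_compl _ b, rfl⟩, outcomeWeight,
    ← prod_mul_prod_compl A]
  congr 1 <;> refine prod_congr rfl fun i hi => ?_
  · rw [if_pos hi]; rfl
  · rw [if_neg (mem_compl.1 hi)]; rfl

end Bernoulli

section RealBernoulli

variable {ι Ω : Type*} [Fintype ι] [DecidableEq ι] [MeasurableSpace Ω] {P : Measure Ω}
  {Δ : ι → Ω → ℝ}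

lemma measure_sum_eq_natCast (hmeas : ∀ i, Measurable (Δ i)) (h01 : ∀ i ω, Δ i ω = 0 ∨ Δ i ω = 1)
    (hindep : iIndepFun Δ P) (y : ℕ) :
    P {ω | ∑ i, Δ i ω = y} = ∑ A ∈ powersetCard y univ,
      outcomeWeight (fun i => P {ω | Δ i ω = 1}) (fun i => P {ω | Δ i ω ≠ 1}) A := by
  have hfiber : {ω | ∑ i, Δ i ω = y} =
      (fun ω => univ.filter fun i => Δ i ω = 1) ⁻¹' ↑(powersetCard y (univ : Finset ι)) := by
    ext ω
    simp [sum_eq_card_filter_eq_one (h01 · ω)]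
  rw [hfiber, ← sum_measure_preimage_singleton _
    fun A _ => measurableSet_setOf_filter_eq_eq hmeas 1 A]
  exact sum_congr rfl fun A _ => measure_setOf_filter_eq_eq hindep 1 A

lemma measure_sum_eq_le_measure_card_sub_sum_eq (hmeas : ∀ i, Measurable (Δ i))
    (h01 : ∀ i ω, Δ i ω = 0 ∨ Δ i ω = 1) (hindep : iIndepFun Δ P)
    (hle : ∀ i, P {ω | Δ i ω = 1} ≤ P {ω | Δ i ω ≠ 1}) {x : ℕ} (hx : Fintype.card ι ≤ 2 * x) :
    P {ω | ∑ i, Δ i ω = x} ≤ P {ω | (Fintype.card ι : ℝ) - ∑ i, Δ i ω = x} := by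
  rcases le_or_gt x (Fintype.card ι) with hxn | hnx
  · have hcompl : {ω | (Fintype.card ι : ℝ) - ∑ i, Δ i ω = x} =
        {ω | ∑ i, Δ i ω = ((Fintype.card ι - x : ℕ) : ℝ)} := by
      ext ω
      simp only [Set.mem_ofPred_eq, Nat.cast_sub hxn]
      constructor <;> intro h <;> linarith
    rw [hcompl, measure_sum_eq_natCast hmeas h01 hindep, measure_sum_eq_natCast hmeas h01 hindep]
    exact sum_outcomeWeight_powersetCard_le hle (by omega) (by omega)
  · rw [measure_sum_eq_natCast hmeas h01 hindep, powersetCard_eq_empty.2 (by simpa), sum_empty]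
    exact zero_le

end RealBernoulli

lemma measure_le_measure_compl_of_le_inv_two {Ω : Type*} [MeasurableSpace Ω] {P : Measure Ω}
    [IsProbabilityMeasure P] {s : Set Ω} (hs : MeasurableSet s) (hle : P s ≤ 2⁻¹) :
    P s ≤ P sᶜ := by
  rw [prob_compl_eq_one_sub hs]
  calc P s ≤ 1 - 2⁻¹ := by rwa [ENNReal.one_sub_inv_two]
    _ ≤ 1 - P s := tsub_le_tsub_left hle 1

theorem bernoulli_sum_cond_pmf_le_of_half_le_general
    {Ω : Type*} [MeasurableSpace Ω] (P : Measure Ω) [IsProbabilityMeasure P]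
    (n : ℕ) (Δ : Fin n → Ω → ℝ) (p : Fin n → ℝ)
    (hmeas : ∀ i, Measurable (Δ i))
    (h01 : ∀ i ω, Δ i ω = 0 ∨ Δ i ω = 1)
    (hlaw : ∀ i, P {ω | Δ i ω = 1} = ENNReal.ofReal (p i))
    (hp : ∀ i, p i ≤ 1 / 2)
    (hindep : iIndepFun Δ P)
    (C : ℕ)
    (x : ℕ) (hx₁ : (n : ℝ) / 2 ≤ x) :
    P ({ω | ∑ i, Δ i ω = (x : ℝ)} ∩
        {ω | ∑ i, Δ i ω < (C : ℝ) ∧ (n : ℝ) - ∑ i, Δ i ω < (C : ℝ)}) /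
      P {ω | ∑ i, Δ i ω < (C : ℝ) ∧ (n : ℝ) - ∑ i, Δ i ω < (C : ℝ)} ≤
    P ({ω | (n : ℝ) - ∑ i, Δ i ω = (x : ℝ)} ∩
        {ω | ∑ i, Δ i ω < (C : ℝ) ∧ (n : ℝ) - ∑ i, Δ i ω < (C : ℝ)}) /
      P {ω | ∑ i, Δ i ω < (C : ℝ) ∧ (n : ℝ) - ∑ i, Δ i ω < (C : ℝ)} := by
  have hle : ∀ i, P {ω | Δ i ω = 1} ≤ P {ω | Δ i ω ≠ 1} := fun i =>
    measure_le_measure_compl_of_le_inv_two (hmeas i (measurableSet_singleton 1)) <| by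
      rw [hlaw i]
      exact ENNReal.ofReal_le_of_le_toReal (by simpa using hp i)
  set S := {ω | ∑ i, Δ i ω < (C : ℝ) ∧ (n : ℝ) - ∑ i, Δ i ω < (C : ℝ)}
  refine ENNReal.div_le_div_right ?_ _
  by_cases hxC : (x : ℝ) < C ∧ (n : ℝ) - x < C
  · have h₁ : {ω | ∑ i, Δ i ω = (x : ℝ)} ⊆ S := fun ω (hω : _ = _) => by
      simpa only [S, Set.mem_ofPred_eq, hω] using hxC
    have h₂ : {ω | (n : ℝ) - ∑ i, Δ i ω = x} ⊆ S := fun ω (hω : _ = _) => by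
      simp only [S, Set.mem_ofPred_eq, hω]
      exact ⟨by linarith [hxC.2], hxC.1⟩
    rw [Set.inter_eq_left.2 h₁, Set.inter_eq_left.2 h₂]
    have hx : n ≤ 2 * x := by exact_mod_cast (div_le_iff₀' two_pos).1 hx₁
    simpa using measure_sum_eq_le_measure_card_sub_sum_eq hmeas h01 hindep hle (by simpa using hx)
  · have hempty : {ω | ∑ i, Δ i ω = (x : ℝ)} ∩ S = ∅ :=
      Set.eq_empty_of_forall_notMem fun ω ⟨(hω : _ = _), hS⟩ => hxC (hω ▸ hS)
    rw [hempty, measure_empty]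
    exact zero_le

/-- Lemma 3, second part: for independent Bernoulli variables Δ₁,...,Δₙ with
success probabilities `p i ≤ 1/2`, letting `ξ₁ = ∑ Δ i` and `ξ₂ = n - ξ₁`, and a
positive integer capacity `C` with `P(ξ₁ < C, ξ₂ < C) > 0`, for every integer `x`
with `max(n/2, n - C) ≤ x < C` we have
`P(ξ₁ = x ∣ ξ₁ < C, ξ₂ < C) ≤ P(ξ₂ = x ∣ ξ₁ < C, ξ₂ < C)`,
where `P(A ∣ B) = P(A ∩ B) / P(B)`. -/
theorem bernoulli_sum_cond_pmf_le_of_half_le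
    {Ω : Type*} [MeasurableSpace Ω] (P : Measure Ω) [IsProbabilityMeasure P]
    (n : ℕ) (Δ : Fin n → Ω → ℝ) (p : Fin n → ℝ)
    (hmeas : ∀ i, Measurable (Δ i))
    (h01 : ∀ i ω, Δ i ω = 0 ∨ Δ i ω = 1)
    (hlaw : ∀ i, P {ω | Δ i ω = 1} = ENNReal.ofReal (p i))
    (hp : ∀ i, p i ≤ 1 / 2)
    (hindep : iIndepFun Δ P)
    (C : ℕ) (hC : 0 < C)
    (hB : 0 < P {ω | ∑ i, Δ i ω < (C : ℝ) ∧ (n : ℝ) - ∑ i, Δ i ω < (C : ℝ)})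
    (x : ℕ) (hx₁ : (n : ℝ) / 2 ≤ x) (hx₂ : (n : ℝ) - (C : ℝ) ≤ x) (hx₃ : x < C) :
    P ({ω | ∑ i, Δ i ω = (x : ℝ)} ∩
        {ω | ∑ i, Δ i ω < (C : ℝ) ∧ (n : ℝ) - ∑ i, Δ i ω < (C : ℝ)}) /
      P {ω | ∑ i, Δ i ω < (C : ℝ) ∧ (n : ℝ) - ∑ i, Δ i ω < (C : ℝ)} ≤
    P ({ω | (n : ℝ) - ∑ i, Δ i ω = (x : ℝ)} ∩
        {ω | ∑ i, Δ i ω < (C : ℝ) ∧ (n : ℝ) - ∑ i, Δ i ω < (C : ℝ)}) /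
      P {ω | ∑ i, Δ i ω < (C : ℝ) ∧ (n : ℝ) - ∑ i, Δ i ω < (C : ℝ)} :=
  bernoulli_sum_cond_pmf_le_of_half_le_general P n Δ p hmeas h01 hlaw hp hindep C x hx₁
end

section
/- Let Δ_1,...,Δ_n be independent {0,1}-valued random variables with P(Δ_i = 1) = p_i and P(Δ_i = 0) = q_i = 1 − p_i, where p_i ≤ 1/2 for every i. Let ξ_1 = Σ_{i=1}^n Δ_i and ξ_2 = n − ξ_1, and let C be a positive integer with P(ξ_1 < C and ξ_2 < C) > 0. Then, conditionally on the event {ξ_1 < C and ξ_2 < C}, ξ_1 is stochastically smaller than ξ_2: for every real x, P(ξ_1 > x | ξ_1 < C, ξ_2 < C) ≤ P(ξ_2 > x | ξ_1 < C, ξ_2 < C). -/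
open MeasureTheory ProbabilityTheory Finset

/-!
Let `N` be the number of successes. `P(N = k)` is the sum, over the `k`-subsets `A`, of the
weights `w A = ∏_{i ∈ A} p_i ∏_{i ∉ A} q_i`, and `w` only decreases when `A` grows because
`p_i ≤ q_i`. Double counting the pairs `B ⊆ A` with `|A| = k`, `|B| = n - k` then gives
`P(N = k) ≤ P(N = n - k)` for `k ≥ n / 2`. The conditioning event `{N < C, n - N < C}` is
invariant under `N ↦ n - N`. On it, the values `k` with `k > x` and `n - k > x` contribute equally
to both sides, and the remaining values `k > x ≥ n - k` have `k > n / 2`, where the reflection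
inequality applies.
-/

section DoubleCounting

variable {α M : Type*} [DecidableEq α] [AddCommMonoid M] [PartialOrder M] [IsOrderedAddMonoid M]

theorem choose_nsmul_sum_powersetCard_le {s : Finset α} {w : Finset α → M} {j k : ℕ}
    (hjk : j ≤ k) (hw : ∀ A ∈ s.powersetCard k, ∀ B ∈ A.powersetCard j, w A ≤ w B) :
    k.choose j • ∑ A ∈ s.powersetCard k, w A ≤
      (#s - j).choose (k - j) • ∑ B ∈ s.powersetCard j, w B :=
  calc k.choose j • ∑ A ∈ s.powersetCard k, w A
      = ∑ A ∈ s.powersetCard k, ∑ _B ∈ A.powersetCard j, w A := by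
        rw [smul_sum]
        refine sum_congr rfl fun A hA => ?_
        rw [sum_const, card_powersetCard, (mem_powersetCard.mp hA).2]
    _ ≤ ∑ A ∈ s.powersetCard k, ∑ B ∈ A.powersetCard j, w B :=
        sum_le_sum fun A hA => sum_le_sum (hw A hA)
    _ = ∑ B ∈ s.powersetCard j, ∑ A ∈ s.powersetCard k with B ⊆ A, w B := by
        refine sum_comm' fun A B => ?_
        simp only [mem_powersetCard, mem_filter]
        constructor
        · rintro ⟨⟨hAs, rfl⟩, hBA, rfl⟩
          exact ⟨⟨⟨hAs, rfl⟩, hBA⟩, hBA.trans hAs, rfl⟩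
        · rintro ⟨⟨⟨hAs, rfl⟩, hBA⟩, -, rfl⟩
          exact ⟨⟨hAs, rfl⟩, hBA, rfl⟩
    _ = (#s - j).choose (k - j) • ∑ B ∈ s.powersetCard j, w B := by
        rw [smul_sum]
        refine sum_congr rfl fun B hB => ?_
        obtain ⟨hBs, hBj⟩ := mem_powersetCard.mp hB
        rw [sum_const, card_filter_powersetCard_subset B s k hBs (hBj ▸ hjk), hBj]

end DoubleCounting

theorem ENNReal.sum_powersetCard_le_sum_powersetCard_card_sub {α : Type*} [DecidableEq α]
    {s : Finset α} {w : Finset α → ENNReal} {k : ℕ} (hk : #s ≤ 2 * k)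
    (hw : ∀ A ⊆ s, ∀ B ⊆ A, w A ≤ w B) :
    ∑ A ∈ s.powersetCard k, w A ≤ ∑ B ∈ s.powersetCard (#s - k), w B := by
  rcases lt_or_ge #s k with hks | hks
  · simp [powersetCard_eq_empty.mpr hks]
  have hmain := choose_nsmul_sum_powersetCard_le (s := s) (w := w) (j := #s - k) (k := k)
    (by omega) fun A hA B hB => hw A (mem_powersetCard.mp hA).1 B (mem_powersetCard.mp hB).1
  rwa [show #s - (#s - k) = k by omega, Nat.choose_symm (by omega), nsmul_eq_mul, nsmul_eq_mul,
    ENNReal.mul_le_mul_iff_right (by simp [Nat.choose_eq_zero_iff]; omega) (by simp)] at hmain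

section Reflection

variable {M : Type*} [AddCommMonoid M]

theorem sum_range_filter_reflect (n : ℕ) (f : ℕ → M) (p : ℕ → Prop) [DecidablePred p] :
    ∑ k ∈ range (n + 1) with p (n - k), f k = ∑ k ∈ range (n + 1) with p k, f (n - k) := by
  refine sum_nbij' (n - ·) (n - ·) ?_ ?_ ?_ ?_ ?_ <;> simp +contextual [Nat.sub_sub_self]

theorem sum_range_filter_reflect_of_iff {n : ℕ} (f : ℕ → M) {p : ℕ → Prop}
    [DecidablePred p] (hp : ∀ k ≤ n, p (n - k) ↔ p k) :
    ∑ k ∈ range (n + 1) with p k, f k = ∑ k ∈ range (n + 1) with p k, f (n - k) := by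
  rw [← sum_range_filter_reflect]
  exact sum_congr (filter_congr fun k hk => (hp k (Nat.lt_succ_iff.mp (mem_range.mp hk))).symm)
    fun _ _ => rfl

variable [PartialOrder M] [IsOrderedAddMonoid M]

theorem sum_filter_le_sum_filter_reflect {n : ℕ} {f : ℕ → M}
    (hf : ∀ k ≤ n, n ≤ 2 * k → f k ≤ f (n - k)) {U S : ℕ → Prop} [DecidablePred U]
    [DecidablePred S] (hU : Monotone U) (hS : ∀ k ≤ n, S (n - k) ↔ S k) :
    ∑ k ∈ range (n + 1) with U k ∧ S k, f k ≤
      ∑ k ∈ range (n + 1) with U (n - k) ∧ S k, f k := by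
  have hsplit (g : ℕ → M) :=
    sum_filter_add_sum_filter_not {k ∈ range (n + 1) | U k ∧ S k} (fun k => U (n - k)) g
  simp only [filter_filter, and_assoc] at hsplit
  calc ∑ k ∈ range (n + 1) with U k ∧ S k, f k
      = ∑ k ∈ range (n + 1) with U k ∧ S k ∧ U (n - k), f k
        + ∑ k ∈ range (n + 1) with U k ∧ S k ∧ ¬U (n - k), f k := (hsplit f).symm
    _ ≤ ∑ k ∈ range (n + 1) with U k ∧ S k ∧ U (n - k), f (n - k)
        + ∑ k ∈ range (n + 1) with U k ∧ S k ∧ ¬U (n - k), f (n - k) := by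
        refine add_le_add (sum_range_filter_reflect_of_iff f fun k hk => ?_).le
          (sum_le_sum fun k hk => ?_)
        · rw [Nat.sub_sub_self hk, hS k hk]
          tauto
        · simp only [mem_filter, mem_range] at hk
          obtain ⟨hkn, hUk, -, hUnk⟩ := hk
          refine hf k (by omega) ?_
          by_contra! hkn'
          exact hUnk (hU (by omega) hUk)
    _ = ∑ k ∈ range (n + 1) with U k ∧ S k, f (n - k) := hsplit _
    _ = ∑ k ∈ range (n + 1) with U (n - k) ∧ S k, f k := by
        rw [← sum_range_filter_reflect]
        exact sum_congr (filter_congr fun k hk => by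
          rw [hS k (Nat.lt_succ_iff.mp (mem_range.mp hk))]) fun _ _ => rfl

end Reflection

section ReflectionDominance

variable {Ω : Type*} [MeasurableSpace Ω] {P : Measure Ω}

theorem measure_le_measure_reflect_of_le_reflect {n : ℕ} {N : Ω → ℕ}
    (hN : ∀ k, MeasurableSet {ω | N ω = k}) (hNn : ∀ ω, N ω ≤ n)
    (hrefl : ∀ k ≤ n, n ≤ 2 * k → P {ω | N ω = k} ≤ P {ω | N ω = n - k})
    {U S : ℕ → Prop} (hU : Monotone U) (hS : ∀ k ≤ n, S (n - k) ↔ S k) :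
    P {ω | U (N ω) ∧ S (N ω)} ≤ P {ω | U (n - N ω) ∧ S (N ω)} := by
  classical
  have hsum (p : ℕ → Prop) [DecidablePred p] :
      P {ω | p (N ω)} = ∑ k ∈ range (n + 1) with p k, P {ω | N ω = k} :=
    calc P {ω | p (N ω)} = P (N ⁻¹' ↑{k ∈ range (n + 1) | p k}) := by
          congr 1
          ext ω
          simp [hNn ω]
      _ = _ := (sum_measure_preimage_singleton _ fun k _ => hN k).symm
  rw [hsum fun k => U k ∧ S k, hsum fun k => U (n - k) ∧ S k]
  exact sum_filter_le_sum_filter_reflect hrefl hU hS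

theorem measure_eq_one_le_measure_eq_zero [IsProbabilityMeasure P] {X : Ω → ℝ}
    (hX : Measurable X) (h01 : ∀ ω, X ω = 0 ∨ X ω = 1) (h : P {ω | X ω = 1} ≤ 1 / 2) :
    P {ω | X ω = 1} ≤ P {ω | X ω = 0} := by
  have hcompl : {ω | X ω = 0} = {ω | X ω = 1}ᶜ := by
    ext ω
    rcases h01 ω with h | h <;> simp [h]
  rw [hcompl, prob_compl_eq_one_sub (s := {ω | X ω = 1}) (hX (measurableSet_singleton 1))]
  refine ENNReal.le_sub_of_add_le_left (measure_ne_top _ _) ?_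
  calc P {ω | X ω = 1} + P {ω | X ω = 1} ≤ 1 / 2 + 1 / 2 := add_le_add h h
    _ = 1 := ENNReal.add_halves 1

end ReflectionDominance

section Successes

variable {Ω : Type*} {n : ℕ} {Δ : Fin n → Ω → ℝ}

noncomputable def successes (Δ : Fin n → Ω → ℝ) (ω : Ω) : Finset (Fin n) :=
  {i | Δ i ω = 1}

theorem sum_eq_card_successes (h01 : ∀ i ω, Δ i ω = 0 ∨ Δ i ω = 1) (ω : Ω) :
    ∑ i, Δ i ω = #(successes Δ ω) := by
  rw [successes, natCast_card_filter]
  exact sum_congr rfl fun i _ => by rcases h01 i ω with h | h <;> simp [h]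

theorem setOf_successes_eq (h01 : ∀ i ω, Δ i ω = 0 ∨ Δ i ω = 1) (A : Finset (Fin n)) :
    {ω | successes Δ ω = A} = ⋂ i ∈ univ, Δ i ⁻¹' {if i ∈ A then 1 else 0} := by
  ext ω
  simp only [successes, Finset.ext_iff, Set.mem_iInter]
  refine forall_congr' fun i => ?_
  rcases h01 i ω with h | h <;> split_ifs <;> simp_all

variable [MeasurableSpace Ω] {P : Measure Ω}

theorem measurableSet_card_successes_eq (hmeas : ∀ i, Measurable (Δ i))
    (h01 : ∀ i ω, Δ i ω = 0 ∨ Δ i ω = 1) (k : ℕ) :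
    MeasurableSet {ω | #(successes Δ ω) = k} := by
  simp_rw [← Nat.cast_inj (R := ℝ), ← sum_eq_card_successes h01]
  exact measurableSet_eq_fun (Finset.measurable_sum _ fun i _ => hmeas i) measurable_const

theorem measure_successes_eq (h01 : ∀ i ω, Δ i ω = 0 ∨ Δ i ω = 1) (hindep : iIndepFun Δ P)
    (A : Finset (Fin n)) :
    P {ω | successes Δ ω = A} =
      ∏ i, if i ∈ A then P {ω | Δ i ω = 1} else P {ω | Δ i ω = 0} := by
  rw [setOf_successes_eq h01,
    hindep.measure_inter_preimage_eq_mul _ fun i _ => measurableSet_singleton _]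
  exact prod_congr rfl fun i _ => by split_ifs <;> rfl

theorem measure_card_successes_eq (hmeas : ∀ i, Measurable (Δ i))
    (h01 : ∀ i ω, Δ i ω = 0 ∨ Δ i ω = 1) (k : ℕ) :
    P {ω | #(successes Δ ω) = k} =
      ∑ A ∈ univ.powersetCard k, P {ω | successes Δ ω = A} := by
  have hfiber (A : Finset (Fin n)) : MeasurableSet {ω | successes Δ ω = A} := by
    rw [setOf_successes_eq h01]
    exact Finset.measurableSet_biInter _ fun i _ => hmeas i (measurableSet_singleton _)
  calc P {ω | #(successes Δ ω) = k}
      = P (successes Δ ⁻¹' ↑(powersetCard k (univ : Finset (Fin n)))) := by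
        congr 1
        ext ω
        simp
    _ = _ := (sum_measure_preimage_singleton _ fun A _ => hfiber A).symm

theorem measure_card_successes_le (hmeas : ∀ i, Measurable (Δ i))
    (h01 : ∀ i ω, Δ i ω = 0 ∨ Δ i ω = 1) (hindep : iIndepFun Δ P)
    (hp : ∀ i, P {ω | Δ i ω = 1} ≤ P {ω | Δ i ω = 0}) {k : ℕ} (hk : n ≤ 2 * k) :
    P {ω | #(successes Δ ω) = k} ≤ P {ω | #(successes Δ ω) = n - k} := by
  simp only [measure_card_successes_eq hmeas h01, measure_successes_eq h01 hindep]
  simpa using ENNReal.sum_powersetCard_le_sum_powersetCard_card_sub (s := (univ : Finset (Fin n)))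
    (w := fun A => ∏ i, if i ∈ A then P {ω | Δ i ω = 1} else P {ω | Δ i ω = 0})
    (by simpa using hk) fun A _ B hBA => prod_le_prod' fun i _ => by
      by_cases hiB : i ∈ B
      · simp [hiB, hBA hiB]
      · split_ifs <;> simp [hp]

end Successes

theorem bernoulli_sum_cond_stochastically_smaller_general
    {Ω : Type*} [MeasurableSpace Ω] (P : Measure Ω) [IsProbabilityMeasure P]
    (n : ℕ) (Δ : Fin n → Ω → ℝ) (p : Fin n → ℝ)
    (hmeas : ∀ i, Measurable (Δ i))
    (h01 : ∀ i ω, Δ i ω = 0 ∨ Δ i ω = 1)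
    (hlaw : ∀ i, P {ω | Δ i ω = 1} = ENNReal.ofReal (p i))
    (hp : ∀ i, p i ≤ 1 / 2)
    (hindep : iIndepFun Δ P)
    (C : ℕ)
    (x : ℝ) :
    P ({ω | x < ∑ i, Δ i ω} ∩
        {ω | ∑ i, Δ i ω < (C : ℝ) ∧ (n : ℝ) - ∑ i, Δ i ω < (C : ℝ)}) /
      P {ω | ∑ i, Δ i ω < (C : ℝ) ∧ (n : ℝ) - ∑ i, Δ i ω < (C : ℝ)} ≤
    P ({ω | x < (n : ℝ) - ∑ i, Δ i ω} ∩
        {ω | ∑ i, Δ i ω < (C : ℝ) ∧ (n : ℝ) - ∑ i, Δ i ω < (C : ℝ)}) /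
      P {ω | ∑ i, Δ i ω < (C : ℝ) ∧ (n : ℝ) - ∑ i, Δ i ω < (C : ℝ)} := by
  have hsuccess_le_failure (i : Fin n) : P {ω | Δ i ω = 1} ≤ P {ω | Δ i ω = 0} := by
    refine measure_eq_one_le_measure_eq_zero (hmeas i) (h01 i) ?_
    calc P {ω | Δ i ω = 1} ≤ ENNReal.ofReal (1 / 2) :=
          hlaw i ▸ ENNReal.ofReal_le_ofReal (hp i)
      _ = 1 / 2 := by simp
  have hcard_le (ω : Ω) : #(successes Δ ω) ≤ n := by
    simpa using card_le_univ (successes Δ ω)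
  have hcomparison := measure_le_measure_reflect_of_le_reflect (P := P)
    (N := fun ω => #(successes Δ ω)) (U := fun k => x < (k : ℝ))
    (S := fun k => (k : ℝ) < C ∧ (n : ℝ) - k < C)
    (measurableSet_card_successes_eq hmeas h01) hcard_le
    (fun k _ hk => measure_card_successes_le hmeas h01 hindep hsuccess_le_failure hk)
    (fun k l hkl hk => hk.trans_le (by exact_mod_cast hkl))
    fun k hk => by
      simp only [Nat.cast_sub hk, sub_sub_cancel]
      exact and_comm
  refine ENNReal.div_le_div_right (le_of_eq_of_le ?_ (hcomparison.trans_eq ?_)) _ <;>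
    congr 1 <;> ext ω <;> simp [sum_eq_card_successes h01, Nat.cast_sub (hcard_le ω)]

/-- Lemma 3, conditional stochastic dominance: for independent Bernoulli variables
Δ₁,...,Δₙ with success probabilities `p i ≤ 1/2`, letting `ξ₁ = ∑ Δ i` and
`ξ₂ = n - ξ₁`, and a positive integer capacity `C` with `P(ξ₁ < C, ξ₂ < C) > 0`,
conditionally on `{ξ₁ < C, ξ₂ < C}` the variable `ξ₁` is stochastically smaller
than `ξ₂`: for every real `x`,
`P(ξ₁ > x ∣ ξ₁ < C, ξ₂ < C) ≤ P(ξ₂ > x ∣ ξ₁ < C, ξ₂ < C)`,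
where `P(A ∣ B) = P(A ∩ B) / P(B)`. -/
theorem bernoulli_sum_cond_stochastically_smaller
    {Ω : Type*} [MeasurableSpace Ω] (P : Measure Ω) [IsProbabilityMeasure P]
    (n : ℕ) (Δ : Fin n → Ω → ℝ) (p : Fin n → ℝ)
    (hmeas : ∀ i, Measurable (Δ i))
    (h01 : ∀ i ω, Δ i ω = 0 ∨ Δ i ω = 1)
    (hlaw : ∀ i, P {ω | Δ i ω = 1} = ENNReal.ofReal (p i))
    (hp : ∀ i, p i ≤ 1 / 2)
    (hindep : iIndepFun Δ P)
    (C : ℕ) (hC : 0 < C)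
    (hB : 0 < P {ω | ∑ i, Δ i ω < (C : ℝ) ∧ (n : ℝ) - ∑ i, Δ i ω < (C : ℝ)})
    (x : ℝ) :
    P ({ω | x < ∑ i, Δ i ω} ∩
        {ω | ∑ i, Δ i ω < (C : ℝ) ∧ (n : ℝ) - ∑ i, Δ i ω < (C : ℝ)}) /
      P {ω | ∑ i, Δ i ω < (C : ℝ) ∧ (n : ℝ) - ∑ i, Δ i ω < (C : ℝ)} ≤
    P ({ω | x < (n : ℝ) - ∑ i, Δ i ω} ∩
        {ω | ∑ i, Δ i ω < (C : ℝ) ∧ (n : ℝ) - ∑ i, Δ i ω < (C : ℝ)}) /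
      P {ω | ∑ i, Δ i ω < (C : ℝ) ∧ (n : ℝ) - ∑ i, Δ i ω < (C : ℝ)} :=
  bernoulli_sum_cond_stochastically_smaller_general P n Δ p hmeas h01 hlaw hp hindep C x
end

section
/- Let r_1,...,r_n be real numbers with 0 ≤ r_i ≤ 1 for every i, and let s be an integer with 0 ≤ s ≤ n/2. Then the (n − s)-th elementary symmetric polynomial of r_1,...,r_n is at most the s-th elementary symmetric polynomial: Σ_{S ⊆ {1,...,n}, |S| = n − s} ∏_{i ∈ S} r_i ≤ Σ_{S ⊆ {1,...,n}, |S| = s} ∏_{i ∈ S} r_i. -/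
open Finset

/-- The number of `(n-s)`-subsets of `univ : Finset (Fin n)` containing a fixed
`s`-subset `T` is `(n-s).choose s`, provided `2*s ≤ n`. -/
lemma card_supersets (n s : ℕ) (hs : 2 * s ≤ n) (T : Finset (Fin n)) (hT : T.card = s) :
    ((Finset.powersetCard (n - s) (Finset.univ : Finset (Fin n))).filter
      (fun S => T ⊆ S)).card = (n - s).choose s := by
  have hsn : s ≤ n := le_trans (by omega) hs
  have hcard : (Finset.univ \ T).card = n - s := by
    rw [Finset.card_sdiff_of_subset (Finset.subset_univ T), hT, Finset.card_univ, Fintype.card_fin]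
  have key : ((Finset.powersetCard (n - s) (Finset.univ : Finset (Fin n))).filter
      (fun S => T ⊆ S)).card = (Finset.powersetCard (n - s - s) (Finset.univ \ T)).card := by
    apply Finset.card_bij' (fun S _ => S \ T) (fun U _ => U ∪ T)
    · intro S hS
      simp only [Finset.mem_filter, Finset.mem_powersetCard] at hS
      obtain ⟨⟨_, hScard⟩, hTS⟩ := hS
      simp only [Finset.mem_powersetCard]
      constructor
      · exact Finset.sdiff_subset_sdiff (Finset.subset_univ S) le_rfl
      · rw [Finset.card_sdiff_of_subset hTS, hScard, hT]
    · intro U hU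
      simp only [Finset.mem_powersetCard] at hU
      obtain ⟨hUsub, hUcard⟩ := hU
      have hdisj : Disjoint U T := by
        refine Finset.disjoint_left.mpr fun a ha hat => ?_
        exact (Finset.mem_sdiff.mp (hUsub ha)).2 hat
      simp only [Finset.mem_filter, Finset.mem_powersetCard]
      refine ⟨⟨Finset.subset_univ _, ?_⟩, Finset.subset_union_right⟩
      rw [Finset.card_union_of_disjoint hdisj, hUcard, hT]
      omega
    · intro S hS
      simp only [Finset.mem_filter] at hS
      exact Finset.sdiff_union_of_subset hS.2
    · intro U hU
      simp only [Finset.mem_powersetCard] at hU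
      have hdisj : Disjoint U T := by
        refine Finset.disjoint_left.mpr fun a ha hat => ?_
        exact (Finset.mem_sdiff.mp (hU.1 ha)).2 hat
      rw [Finset.union_sdiff_right, Finset.sdiff_eq_self_of_disjoint hdisj]
  rw [key, Finset.card_powersetCard, hcard]
  exact Nat.choose_symm (by omega)

/-- For reals `0 ≤ r i ≤ 1` and an integer `0 ≤ s ≤ n/2`, the `(n-s)`-th
elementary symmetric polynomial of `r₁,...,rₙ` is at most the `s`-th one:
`∑_{|S| = n - s} ∏_{i ∈ S} r i ≤ ∑_{|S| = s} ∏_{i ∈ S} r i`. -/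
theorem esymm_le_esymm_of_le_half
    (n : ℕ) (r : Fin n → ℝ) (hr0 : ∀ i, 0 ≤ r i) (hr1 : ∀ i, r i ≤ 1)
    (s : ℕ) (hs : 2 * s ≤ n) :
    ∑ S ∈ Finset.powersetCard (n - s) (Finset.univ : Finset (Fin n)),
        ∏ i ∈ S, r i ≤
      ∑ S ∈ Finset.powersetCard s (Finset.univ : Finset (Fin n)),
        ∏ i ∈ S, r i := by
  set A := Finset.powersetCard (n - s) (Finset.univ : Finset (Fin n)) with hA
  set B := Finset.powersetCard s (Finset.univ : Finset (Fin n)) with hB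
  set C := (n - s).choose s with hC
  have hsn : s ≤ n - s := by omega
  have hCpos : 0 < C := Nat.choose_pos hsn
  have hCpos' : (0:ℝ) < (C:ℝ) := by exact_mod_cast hCpos
  -- the double-counted sum
  have key : ∀ S ∈ A, (C:ℝ) * ∏ i ∈ S, r i ≤
      ∑ T ∈ B, if T ⊆ S then ∏ i ∈ T, r i else 0 := by
    intro S hS
    simp only [hA, Finset.mem_powersetCard] at hS
    have hfil : B.filter (fun T => T ⊆ S) = Finset.powersetCard s S := by
      ext T
      simp only [hB, Finset.mem_filter, Finset.mem_powersetCard]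
      tauto
    rw [← Finset.sum_filter, hfil]
    have hcards : (Finset.powersetCard s S).card = C := by
      rw [Finset.card_powersetCard, hS.2, hC]
    calc (C:ℝ) * ∏ i ∈ S, r i
        = ∑ _T ∈ Finset.powersetCard s S, ∏ i ∈ S, r i := by
          rw [Finset.sum_const, hcards, nsmul_eq_mul]
      _ ≤ ∑ T ∈ Finset.powersetCard s S, ∏ i ∈ T, r i := by
          apply Finset.sum_le_sum
          intro T hT
          rw [Finset.mem_powersetCard] at hT
          have := Finset.prod_sdiff hT.1 (f := r)
          rw [← this]
          have h1 : ∏ i ∈ S \ T, r i ≤ 1 :=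
            Finset.prod_le_one (fun i _ => hr0 i) (fun i _ => hr1 i)
          have h2 : (0:ℝ) ≤ ∏ i ∈ T, r i := Finset.prod_nonneg (fun i _ => hr0 i)
          nlinarith [Finset.prod_nonneg (fun i (_ : i ∈ S \ T) => hr0 i)]
  have step1 : (C:ℝ) * ∑ S ∈ A, ∏ i ∈ S, r i ≤
      ∑ S ∈ A, ∑ T ∈ B, if T ⊆ S then ∏ i ∈ T, r i else 0 := by
    rw [Finset.mul_sum]
    exact Finset.sum_le_sum key
  have step2 : ∑ S ∈ A, ∑ T ∈ B, (if T ⊆ S then ∏ i ∈ T, r i else 0) =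
      (C:ℝ) * ∑ T ∈ B, ∏ i ∈ T, r i := by
    rw [Finset.sum_comm, Finset.mul_sum]
    apply Finset.sum_congr rfl
    intro T hT
    simp only [hB, Finset.mem_powersetCard] at hT
    have : ∑ S ∈ A, (if T ⊆ S then ∏ i ∈ T, r i else 0) =
        ((A.filter (fun S => T ⊆ S)).card : ℝ) * ∏ i ∈ T, r i := by
      rw [← Finset.sum_filter, Finset.sum_const, nsmul_eq_mul]
    rw [this, hA, card_supersets n s hs T hT.2, hC]
  rw [step2] at step1
  exact le_of_mul_le_mul_left step1 hCpos'
end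

section
/- Let k ≥ 1, C ≥ 1, n ≥ 0 be integers and let p_1,...,p_k be nonnegative reals with Σ_i p_i = 1. For n i.i.d. draws from the categorical distribution with probabilities p_1,...,p_k, let X_i be the number of draws equal to i. Then the probability that no bin is full, P(X_i < C for all i) = Σ_{f : {1,...,n} → {1,...,k}, #f^{-1}(i) ≤ C−1 ∀i} ∏_{m=1}^n p_{f(m)}, is maximized over all probability vectors (p_1,...,p_k) by the uniform distribution p_1 = ⋯ = p_k = 1/k; that is, it is at most Σ_{f : #f^{-1}(i) ≤ C−1 ∀i} (1/k)^n. -/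
/-
Write `F(p)` for the sum, over the maps `f` from draws to bins with every fiber smaller than `C`,
of `∏ m, p (f m)`. Fix two bins `i ≠ j`. Grouping the maps `f` by the map `g` that relabels
bin `i` as bin `j`, each group is the set of ways of splitting the `t` draws of `g` in bin `j`
between `i` and `j`, so `F(p) = ∑_g c_g · W_t(p_i, p_j)`, where `c_g ≥ 0` does not involve
`p_i, p_j` and `W_t(u, v) = ∑_{t - C < a < C} (t choose a) u^a v^(t-a)` (with `u + v = 1`, the
probability that `Bin(t, u)` overfills neither bin). Along `u + v = s` the derivative of
`W_t(y, s - y)` telescopes to `t (t-1 choose C-1) (y^(t-C) (s-y)^(C-1) - y^(C-1) (s-y)^(t-C))`,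
which is nonnegative for `y ≤ s / 2` since `t - C ≤ C - 1` whenever the window is nonempty.
So moving `p_i` and `p_j` towards each other never decreases `F`, and finitely many such moves,
each setting one more coordinate to `1 / k`, reach the uniform vector.
-/

open MeasureTheory ProbabilityTheory

/-- The number of the `n` draws `D 0, ..., D (n-1)` that land in bin `i`. -/
def binCount {Ω : Type*} (n k : ℕ) (D : Fin n → Ω → Fin k) (i : Fin k) (ω : Ω) : ℕ :=
  (Finset.univ.filter fun m => D m ω = i).card

open Finset

lemma choose_mul_sub (t a : ℕ) : t.choose a * (t - a) = t * (t - 1).choose a := by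
  cases t with
  | zero => simp
  | succ r => rw [Nat.add_sub_cancel, mul_comm (r + 1), Nat.choose_mul_succ_eq]

lemma hasDerivAt_choose_mul_pow_mul_pow (t a : ℕ) (ha : 1 ≤ a) (s x : ℝ) :
    HasDerivAt (fun y => (t.choose a : ℝ) * y ^ a * (s - y) ^ (t - a))
      (t * (t - 1).choose (a - 1) * x ^ (a - 1) * (s - x) ^ (t - a)
        - t * (t - 1).choose a * x ^ a * (s - x) ^ (t - a - 1)) x := by
  have hderiv := ((hasDerivAt_pow a x).fun_mul
    ((hasDerivAt_id' x).const_sub s |>.fun_pow (t - a))).const_mul (t.choose a : ℝ)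
  rw [show (fun y => (t.choose a : ℝ) * y ^ a * (s - y) ^ (t - a))
      = fun y => (t.choose a : ℝ) * (y ^ a * (s - y) ^ (t - a)) by ext; ring]
  refine hderiv.congr_deriv ?_
  have h₁ : (t.choose a : ℝ) * a = t * (t - 1).choose (a - 1) := by
    obtain ⟨b, rfl⟩ := Nat.exists_eq_add_of_le' ha
    cases t with
    | zero => simp
    | succ r => exact_mod_cast (Nat.add_one_mul_choose_eq r b).symm
  have h₂ : (t.choose a : ℝ) * (t - a : ℕ) = t * (t - 1).choose a := by
    exact_mod_cast choose_mul_sub t a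
  linear_combination (x ^ (a - 1) * (s - x) ^ (t - a)) * h₁
    - (x ^ a * (s - x) ^ (t - a - 1)) * h₂

lemma pow_mul_pow_le_pow_mul_pow {x y : ℝ} (hx : 0 ≤ x) (hxy : x ≤ y) {m n : ℕ} (hmn : m ≤ n) :
    x ^ n * y ^ m ≤ x ^ m * y ^ n := by
  obtain ⟨e, rfl⟩ := Nat.exists_eq_add_of_le hmn
  have hy : 0 ≤ y := hx.trans hxy
  calc x ^ (m + e) * y ^ m = x ^ m * y ^ m * x ^ e := by ring
    _ ≤ x ^ m * y ^ m * y ^ e := by gcongr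
    _ = x ^ m * y ^ (m + e) := by ring

noncomputable def windowSum (t C : ℕ) (u v : ℝ) : ℝ :=
  ∑ a ∈ range (t + 1) with a < C ∧ t - a < C, (t.choose a : ℝ) * u ^ a * v ^ (t - a)

lemma sum_powerset_filter_eq_windowSum {α : Type*} (T : Finset α) (C : ℕ) (u v : ℝ) :
    ∑ S ∈ T.powerset with #S < C ∧ #T - #S < C, u ^ #S * v ^ (#T - #S) = windowSum #T C u v := by
  rw [sum_filter, sum_powerset_apply_card
    (fun a => if a < C ∧ #T - a < C then u ^ a * v ^ (#T - a) else 0), windowSum, sum_filter]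
  refine sum_congr rfl fun a _ => ?_
  split_ifs <;> simp [mul_assoc]

section WindowSum

variable {t C : ℕ}

lemma windowSum_of_lt (h : t < C) (u v : ℝ) : windowSum t C u v = (u + v) ^ t := by
  rw [windowSum, filter_true_of_mem fun a ha => by grind, add_pow]
  exact sum_congr rfl fun a _ => by ring

lemma windowSum_of_le (h : 2 * C ≤ t + 1) (u v : ℝ) : windowSum t C u v = 0 :=
  sum_eq_zero fun a ha => by grind

lemma hasDerivAt_windowSum (hCt : C ≤ t) (htC : t + 1 < 2 * C) (s x : ℝ) :
    HasDerivAt (fun y => windowSum t C y (s - y))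
      (t * (t - 1).choose (C - 1) *
        (x ^ (t - C) * (s - x) ^ (C - 1) - x ^ (C - 1) * (s - x) ^ (t - C))) x := by
  set ψ : ℕ → ℝ := fun a => t * (t - 1).choose (a - 1) * x ^ (a - 1) * (s - x) ^ (t - a)
  have hwindow : {a ∈ range (t + 1) | a < C ∧ t - a < C} = Ico (t + 1 - C) C := by
    ext a; simp only [mem_filter, mem_range, mem_Ico]; omega
  have hterm : ∀ a ∈ Ico (t + 1 - C) C,
      HasDerivAt (fun y => (t.choose a : ℝ) * y ^ a * (s - y) ^ (t - a)) (ψ a - ψ (a + 1)) x := by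
    intro a ha
    convert hasDerivAt_choose_mul_pow_mul_pow t a (by grind) s x using 2
    simp [ψ, Nat.sub_sub]
  have hsum := HasDerivAt.fun_sum hterm
  simp only [windowSum, hwindow]
  refine hsum.congr_deriv ?_
  have hL : t + 1 - C - 1 = t - C := by omega
  have hR : t - (t + 1 - C) = C - 1 := by omega
  have hsymm : (t - 1).choose (t - C) = (t - 1).choose (C - 1) :=
    Nat.choose_symm_of_eq_add (by omega)
  calc ∑ a ∈ Ico (t + 1 - C) C, (ψ a - ψ (a + 1))
      = -∑ a ∈ Ico (t + 1 - C) C, (ψ (a + 1) - ψ a) := by simp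
    _ = ψ (t + 1 - C) - ψ C := by rw [sum_Ico_sub ψ (by omega)]; ring
    _ = _ := by simp only [ψ, hL, hR, hsymm]; ring

end WindowSum

lemma windowSum_monotoneOn (t C : ℕ) (s : ℝ) :
    MonotoneOn (fun y => windowSum t C y (s - y)) (Set.Icc 0 (s / 2)) := by
  rcases lt_or_ge t C with htC | hCt
  · simp only [windowSum_of_lt htC, add_sub_cancel]
    exact monotoneOn_const
  rcases le_or_gt (2 * C) (t + 1) with htC | htC
  · simp only [windowSum_of_le htC]
    exact monotoneOn_const
  have hderiv := hasDerivAt_windowSum hCt htC s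
  refine monotoneOn_of_hasDerivWithinAt_nonneg (convex_Icc _ _)
    (fun x _ => (hderiv x).continuousAt.continuousWithinAt)
    (fun x _ => (hderiv x).hasDerivWithinAt) fun x hx => ?_
  rw [interior_Icc] at hx
  have hpow := pow_mul_pow_le_pow_mul_pow hx.1.le (by linarith [hx.2] : x ≤ s - x)
    (by omega : t - C ≤ C - 1)
  exact mul_nonneg (by positivity) (sub_nonneg.2 hpow)

lemma exists_lt_of_sum_eq_card_mul {κ : Type*} [Fintype κ] {p : κ → ℝ} {c : ℝ}
    (hsum : ∑ l, p l = Fintype.card κ * c) (hne : ∃ l, p l ≠ c) : ∃ i, p i < c := by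
  have hzero : ∑ l, (c - p l) = 0 := by simp [sum_sub_distrib, hsum]
  obtain ⟨i, -, hi⟩ := exists_pos_of_sum_zero_of_exists_nonzero _ hzero <| by
    obtain ⟨l, hl⟩ := hne
    exact ⟨l, mem_univ l, sub_ne_zero.2 hl.symm⟩
  exact ⟨i, sub_pos.1 hi⟩

theorem le_apply_const_of_transfer {κ : Type*} [Fintype κ] [DecidableEq κ]
    (F : (κ → ℝ) → ℝ)
    (hF : ∀ p : κ → ℝ, (∀ l, 0 ≤ p l) → ∀ i j, i ≠ j → ∀ d, 0 ≤ d → p i + d ≤ p j - d →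
      F p ≤ F (p + Pi.single i d - Pi.single j d))
    (p : κ → ℝ) (hp0 : ∀ l, 0 ≤ p l) (c : ℝ) (hsum : ∑ l, p l = Fintype.card κ * c) :
    F p ≤ F (fun _ => c) := by
  induction hN : #{l | p l ≠ c} using Nat.strong_induction_on generalizing p with
  | _ N ih =>
  by_cases hconst : ∀ l, p l = c
  · rw [funext hconst]
  push Not at hconst
  obtain ⟨i, hi⟩ := exists_lt_of_sum_eq_card_mul hsum hconst
  obtain ⟨j, hj⟩ : ∃ j, c < p j := by
    have hneg : ∑ l, -p l = Fintype.card κ * -c := by simp [sum_neg_distrib, hsum]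
    obtain ⟨j, hj⟩ := exists_lt_of_sum_eq_card_mul hneg <| by
      obtain ⟨l, hl⟩ := hconst
      exact ⟨l, by simpa using hl⟩
    exact ⟨j, neg_lt_neg_iff.1 hj⟩
  have hij : i ≠ j := by rintro rfl; linarith
  set d := min (c - p i) (p j - c)
  set q := p + Pi.single i d - Pi.single j d
  have hdi : d ≤ c - p i := min_le_left _ _
  have hdj : d ≤ p j - c := min_le_right _ _
  have hd : 0 ≤ d := le_min (by linarith) (by linarith)
  have hqi : q i = p i + d := by simp [q, hij]
  have hqj : q j = p j - d := by simp [q, hij.symm]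
  have hq : ∀ l, l ≠ i → l ≠ j → q l = p l := fun l hli hlj => by simp [q, hli, hlj]
  have hq0 : ∀ l, 0 ≤ q l := by
    intro l
    by_cases hli : l = i
    · subst hli; rw [hqi]; linarith [hp0 l]
    by_cases hlj : l = j
    · subst hlj; rw [hqj]; linarith [hp0 i]
    · rw [hq l hli hlj]; exact hp0 l
  have hqsum : ∑ l, q l = Fintype.card κ * c := by
    simp [q, sum_add_distrib, sum_sub_distrib, hsum]
  have hfewer : #{l | q l ≠ c} < N := by
    rw [← hN]
    refine card_lt_card ((ssubset_iff_of_subset fun l hl => ?_).2 ?_)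
    · simp only [mem_filter, mem_univ, true_and] at hl ⊢
      by_cases hli : l = i
      · subst hli; exact hi.ne
      by_cases hlj : l = j
      · subst hlj; exact hj.ne'
      · rwa [hq l hli hlj] at hl
    · rcases min_choice (c - p i) (p j - c) with hdi | hdj
      · exact ⟨i, by simp [hi.ne], by simp [hqi, hdi, d]⟩
      · exact ⟨j, by simp [hj.ne'], by simp [hqj, hdj, d]⟩
  calc F p ≤ F q := hF p hp0 i j hij d hd (by linarith)
    _ ≤ F (fun _ => c) := ih _ hfewer q hq0 hqsum rfl

section Merging

variable {ι κ : Type*} [DecidableEq κ] {i j : κ}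

def mergeBin (i j : κ) (f : ι → κ) : ι → κ := fun m => if f m = i then j else f m

lemma mergeBin_ne (hij : i ≠ j) (f : ι → κ) (m : ι) : mergeBin i j f m ≠ i := by
  unfold mergeBin; split_ifs with h <;> grind

variable [Fintype ι]

def fiber (f : ι → κ) (l : κ) : Finset ι := {m | f m = l}

lemma prod_apply_eq_prod_pow_card_fiber [Fintype κ] {M : Type*} [CommMonoid M] (p : κ → M)
    (f : ι → κ) : ∏ m, p (f m) = ∏ l, p l ^ #(fiber f l) := by
  rw [← prod_fiberwise' univ f p]
  exact prod_congr rfl fun l _ => prod_const _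

lemma fiber_subset_fiber_mergeBin (f : ι → κ) : fiber f i ⊆ fiber (mergeBin i j f) j := by
  intro m; simp +contextual [fiber, mergeBin]

variable [DecidableEq ι]

variable (ι) in
noncomputable def noFullBinSum [Fintype κ] (C : ℕ) (p : κ → ℝ) : ℝ :=
  ∑ f : ι → κ with ∀ l, #(fiber f l) < C, ∏ m, p (f m)

section Split

variable {g : ι → κ} {S : Finset ι}

lemma fiber_piecewise_left (hg : ∀ m, g m ≠ i) : fiber (S.piecewise (fun _ => i) g) i = S := by
  ext m; by_cases hm : m ∈ S <;> simp [fiber, hm, hg]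

lemma fiber_piecewise_right (hij : i ≠ j) :
    fiber (S.piecewise (fun _ => i) g) j = fiber g j \ S := by
  ext m; by_cases hm : m ∈ S <;> simp [fiber, hm, hij]

lemma fiber_piecewise_of_ne (hS : S ⊆ fiber g j) {l : κ} (hli : l ≠ i) (hlj : l ≠ j) :
    fiber (S.piecewise (fun _ => i) g) l = fiber g l := by
  ext m
  by_cases hm : m ∈ S
  · have hgm : g m = j := by simpa [fiber] using hS hm
    simp [fiber, hm, hgm, hli.symm, hlj.symm]
  · simp [fiber, hm]

lemma mergeBin_piecewise (hg : ∀ m, g m ≠ i) (hS : S ⊆ fiber g j) :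
    mergeBin i j (S.piecewise (fun _ => i) g) = g := by
  ext m
  by_cases hm : m ∈ S
  · simpa [mergeBin, fiber, hm, eq_comm] using hS hm
  · simp [mergeBin, hm, hg]

lemma prod_pow_card_fiber_piecewise {M : Type*} [CommMonoid M] [Fintype κ] (p : κ → M)
    (hij : i ≠ j) (hg : ∀ m, g m ≠ i) (hS : S ⊆ fiber g j) :
    ∏ l, p l ^ #(fiber (S.piecewise (fun _ => i) g) l)
      = p i ^ #S * p j ^ (#(fiber g j) - #S) * ∏ l ∈ {i, j}ᶜ, p l ^ #(fiber g l) := by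
  rw [← prod_mul_prod_compl {i, j}, prod_pair hij, fiber_piecewise_left hg,
    fiber_piecewise_right hij, card_sdiff_of_subset hS]
  refine congrArg _ (prod_congr rfl fun l hl => ?_)
  simp only [mem_compl, mem_insert, mem_singleton, not_or] at hl
  rw [fiber_piecewise_of_ne hS hl.1 hl.2]

lemma forall_card_fiber_piecewise_lt_iff [Fintype κ] {C : ℕ} (hij : i ≠ j) (hg : ∀ m, g m ≠ i)
    (hS : S ⊆ fiber g j) :
    (∀ l, #(fiber (S.piecewise (fun _ => i) g) l) < C) ↔
      (#S < C ∧ #(fiber g j) - #S < C) ∧ ∀ l ∈ ({i, j} : Finset κ)ᶜ, #(fiber g l) < C := by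
  constructor
  · intro h
    refine ⟨⟨?_, ?_⟩, fun l hl => ?_⟩
    · simpa [fiber_piecewise_left hg] using h i
    · simpa [fiber_piecewise_right hij, card_sdiff_of_subset hS] using h j
    · simp only [mem_compl, mem_insert, mem_singleton, not_or] at hl
      simpa [fiber_piecewise_of_ne hS hl.1 hl.2] using h l
  · rintro ⟨⟨hSC, hTC⟩, hrest⟩ l
    by_cases hli : l = i
    · rwa [hli, fiber_piecewise_left hg]
    by_cases hlj : l = j
    · rwa [hlj, fiber_piecewise_right hij, card_sdiff_of_subset hS]
    · rw [fiber_piecewise_of_ne hS hli hlj]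
      exact hrest l (by simp [hli, hlj])

end Split

lemma piecewise_mergeBin (f : ι → κ) :
    (fiber f i).piecewise (fun _ => i) (mergeBin i j f) = f := by
  ext m; by_cases hm : f m = i <;> simp [Finset.piecewise, fiber, mergeBin, hm]

lemma noFullBinSum_eq_sum_mergeBin [Fintype κ] (C : ℕ) (p : κ → ℝ) (hij : i ≠ j) :
    noFullBinSum ι C p = ∑ g : ι → κ with (∀ m, g m ≠ i) ∧ ∀ l ∈ ({i, j} : Finset κ)ᶜ,
        #(fiber g l) < C,
      (∏ l ∈ {i, j}ᶜ, p l ^ #(fiber g l)) * windowSum #(fiber g j) C (p i) (p j) := by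
  set G : Finset (ι → κ) :=
    {g | (∀ m, g m ≠ i) ∧ ∀ l ∈ ({i, j} : Finset κ)ᶜ, #(fiber g l) < C}
  set window : (ι → κ) → Finset (Finset ι) :=
    fun g => {S ∈ (fiber g j).powerset | #S < C ∧ #(fiber g j) - #S < C}
  have hmem : ∀ g S, ⟨g, S⟩ ∈ G.sigma window ↔ ((∀ m, g m ≠ i) ∧
      ∀ l ∈ ({i, j} : Finset κ)ᶜ, #(fiber g l) < C) ∧ S ⊆ fiber g j ∧
      #S < C ∧ #(fiber g j) - #S < C := by
    simp [G, window]
  -- `f ↦ (mergeBin i j f, fiber f i)` is a bijection onto the pairs `(g, S)` with `S ⊆ fiber g j`.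
  calc noFullBinSum ι C p
      = ∑ x ∈ G.sigma window,
          p i ^ #x.2 * p j ^ (#(fiber x.1 j) - #x.2) * ∏ l ∈ {i, j}ᶜ, p l ^ #(fiber x.1 l) := by
        symm
        refine sum_nbij' (fun x => x.2.piecewise (fun _ => i) x.1)
          (fun f => ⟨mergeBin i j f, fiber f i⟩) ?_ ?_ ?_ ?_ ?_
        · rintro ⟨g, S⟩ hx
          obtain ⟨⟨hg, hrest⟩, hS, hwindow⟩ := (hmem g S).1 hx
          simpa [noFullBinSum] using
            (forall_card_fiber_piecewise_lt_iff hij hg hS).2 ⟨hwindow, hrest⟩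
        · intro f hf
          simp only [mem_filter, mem_univ, true_and] at hf
          have hsplit := (forall_card_fiber_piecewise_lt_iff hij (mergeBin_ne hij f)
            (fiber_subset_fiber_mergeBin f)).1 (by rwa [piecewise_mergeBin])
          exact (hmem _ _).2
            ⟨⟨mergeBin_ne hij f, hsplit.2⟩, fiber_subset_fiber_mergeBin f, hsplit.1⟩
        · rintro ⟨g, S⟩ hx
          obtain ⟨⟨hg, -⟩, hS, -⟩ := (hmem g S).1 hx
          simp [mergeBin_piecewise hg hS, fiber_piecewise_left hg]
        · intro f _
          exact piecewise_mergeBin f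
        · rintro ⟨g, S⟩ hx
          obtain ⟨⟨hg, -⟩, hS, -⟩ := (hmem g S).1 hx
          rw [prod_apply_eq_prod_pow_card_fiber, prod_pow_card_fiber_piecewise p hij hg hS]
    _ = _ := by
        rw [sum_sigma]
        refine sum_congr rfl fun g _ => ?_
        dsimp only
        rw [← sum_mul, sum_powerset_filter_eq_windowSum, mul_comm]

lemma noFullBinSum_le_of_transfer [Fintype κ] (C : ℕ) (p : κ → ℝ) (hp0 : ∀ l, 0 ≤ p l)
    (hij : i ≠ j) {d : ℝ} (hd : 0 ≤ d) (hdij : p i + d ≤ p j - d) :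
    noFullBinSum ι C p ≤ noFullBinSum ι C (p + Pi.single i d - Pi.single j d) := by
  set q := p + Pi.single i d - Pi.single j d
  have hqi : q i = p i + d := by simp [q, hij]
  have hqj : q j = p j - d := by simp [q, hij.symm]
  have hq : ∀ l ∈ ({i, j} : Finset κ)ᶜ, q l = p l := fun l hl => by
    simp only [mem_compl, mem_insert, mem_singleton, not_or] at hl
    simp [q, hl.1, hl.2]
  rw [noFullBinSum_eq_sum_mergeBin C p hij, noFullBinSum_eq_sum_mergeBin C q hij]
  refine sum_le_sum fun g _ => ?_
  have hprod : ∏ l ∈ {i, j}ᶜ, q l ^ #(fiber g l) = ∏ l ∈ {i, j}ᶜ, p l ^ #(fiber g l) :=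
    prod_congr rfl fun l hl => by rw [hq l hl]
  rw [hprod, hqi, hqj]
  refine mul_le_mul_of_nonneg_left ?_ (prod_nonneg fun l _ => pow_nonneg (hp0 l) _)
  have hmono := windowSum_monotoneOn #(fiber g j) C (p i + p j)
    ⟨hp0 i, by linarith⟩ ⟨by linarith [hp0 i], by linarith⟩ (by linarith : p i ≤ p i + d)
  convert hmono using 2 <;> ring

end Merging

theorem toReal_measure_mem_finset_eq_sum_prod {Ω ι κ : Type*} [MeasurableSpace Ω]
    (P : Measure Ω) [Fintype ι] [MeasurableSpace κ] [MeasurableSingletonClass κ]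
    (D : ι → Ω → κ) (hmeas : ∀ m, Measurable (D m)) (hindep : iIndepFun D P)
    (p : κ → ℝ) (hp0 : ∀ l, 0 ≤ p l) (hlaw : ∀ m l, P {ω | D m ω = l} = ENNReal.ofReal (p l))
    (A : Finset (ι → κ)) :
    (P {ω | (fun m => D m ω) ∈ A}).toReal = ∑ f ∈ A, ∏ m, p (f m) := by
  have hpoint : ∀ f : ι → κ, (fun ω m => D m ω) ⁻¹' {f} = ⋂ m, D m ⁻¹' {f m} := by
    intro f; ext ω; simp [funext_iff]
  have hlawvec : ∀ f : ι → κ, P ((fun ω m => D m ω) ⁻¹' {f}) = ENNReal.ofReal (∏ m, p (f m)) := by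
    intro f
    rw [hpoint, hindep.meas_iInter fun m => ⟨{f m}, measurableSet_singleton _, rfl⟩,
      ENNReal.ofReal_prod_of_nonneg fun m _ => hp0 _]
    exact prod_congr rfl fun m _ => hlaw m (f m)
  rw [show {ω | (fun m => D m ω) ∈ A} = (fun ω m => D m ω) ⁻¹' ↑A from rfl,
    ← sum_measure_preimage_singleton A fun f _ => hpoint f ▸
      MeasurableSet.iInter fun m => hmeas m (measurableSet_singleton _),
    ENNReal.toReal_sum fun f _ => by simp [hlawvec]]
  exact sum_congr rfl fun f _ => by
    rw [hlawvec, ENNReal.toReal_ofReal (prod_nonneg fun m _ => hp0 _)]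

theorem prob_no_full_bin_le_uniform_general
    {Ω : Type*} [MeasurableSpace Ω] (P : Measure Ω)
    (n k C : ℕ) (hk : 1 ≤ k) (D : Fin n → Ω → Fin k) (p : Fin k → ℝ)
    (hmeas : ∀ m, Measurable (D m))
    (hp0 : ∀ i, 0 ≤ p i) (hp1 : ∑ i, p i = 1)
    (hlaw : ∀ m i, P {ω | D m ω = i} = ENNReal.ofReal (p i))
    (hindep : iIndepFun D P) :
    ((P {ω | ∀ i, binCount n k D i ω < C}).toReal =
      ∑ f ∈ (Finset.univ : Finset (Fin n → Fin k)).filter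
          (fun f => ∀ i, (Finset.univ.filter fun m => f m = i).card < C),
        ∏ m, p (f m)) ∧
    (P {ω | ∀ i, binCount n k D i ω < C}).toReal ≤
      ∑ f ∈ (Finset.univ : Finset (Fin n → Fin k)).filter
          (fun f => ∀ i, (Finset.univ.filter fun m => f m = i).card < C),
        ((1 : ℝ) / k) ^ n := by
  have hevent : {ω | ∀ i, binCount n k D i ω < C}
      = {ω | (fun m => D m ω) ∈ ({f | ∀ i, #{m | f m = i} < C} : Finset (Fin n → Fin k))} := by
    ext ω; simp [binCount]
  have hprob := hevent ▸ toReal_measure_mem_finset_eq_sum_prod P D hmeas hindep p hp0 hlaw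
    {f : Fin n → Fin k | ∀ i, #{m | f m = i} < C}
  refine ⟨hprob, hprob ▸ ?_⟩
  have hsum : ∑ l, p l = Fintype.card (Fin k) * (1 / k : ℝ) := by
    rw [hp1, Fintype.card_fin]
    field_simp [show (k : ℝ) ≠ 0 by positivity]
  have hsum_eq : ∀ q : Fin k → ℝ, noFullBinSum (Fin n) C q
      = ∑ f : Fin n → Fin k with ∀ i, #{m | f m = i} < C, ∏ m, q (f m) := fun q => by
    -- the two filters differ only in the `Decidable` instance used for `∀ i : Fin k`
    unfold noFullBinSum fiber
    congr
  rw [← hsum_eq]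
  calc noFullBinSum (Fin n) C p
      ≤ noFullBinSum (Fin n) C fun _ => 1 / (k : ℝ) :=
        le_apply_const_of_transfer _ (fun q hq0 _ _ hij _ hd hdij =>
          noFullBinSum_le_of_transfer C q hq0 hij hd hdij) p hp0 _ hsum
    _ = _ := by simp [hsum_eq]

/-- Theorem: the probability of no full bin is maximized by the uniform
distribution. For counts `X i` of `n` i.i.d. draws from a categorical
distribution with probabilities `p 1, ..., p k`,
`P(∀ i, X i < C) = ∑_{f : [n] → [k], #f⁻¹(i) ≤ C - 1 ∀ i} ∏_m p (f m)`,
and this is at most the corresponding value for the uniform distribution,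
`∑_{f : #f⁻¹(i) ≤ C - 1 ∀ i} (1/k)^n`. -/
theorem prob_no_full_bin_le_uniform
    {Ω : Type*} [MeasurableSpace Ω] (P : Measure Ω) [IsProbabilityMeasure P]
    (n k C : ℕ) (hk : 1 ≤ k) (hC : 1 ≤ C) (D : Fin n → Ω → Fin k) (p : Fin k → ℝ)
    (hmeas : ∀ m, Measurable (D m))
    (hp0 : ∀ i, 0 ≤ p i) (hp1 : ∑ i, p i = 1)
    (hlaw : ∀ m i, P {ω | D m ω = i} = ENNReal.ofReal (p i))
    (hindep : iIndepFun D P) :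
    ((P {ω | ∀ i, binCount n k D i ω < C}).toReal =
      ∑ f ∈ (Finset.univ : Finset (Fin n → Fin k)).filter
          (fun f => ∀ i, (Finset.univ.filter fun m => f m = i).card < C),
        ∏ m, p (f m)) ∧
    (P {ω | ∀ i, binCount n k D i ω < C}).toReal ≤
      ∑ f ∈ (Finset.univ : Finset (Fin n → Fin k)).filter
          (fun f => ∀ i, (Finset.univ.filter fun m => f m = i).card < C),
        ((1 : ℝ) / k) ^ n :=
  prob_no_full_bin_le_uniform_general P n k C hk D p hmeas hp0 hp1 hlaw hindep
end

section
/- Let C and m be integers with C ≤ m ≤ 2(C − 1), and let 0 ≤ p ≤ 1. For X ~ Binomial(m, p), the probability that two bins sharing m objects are both non-full, P(m − C < X < C) = Σ_{x = m−C+1}^{C−1} binom(m, x) p^x (1 − p)^{m−x}, is maximized at p = 1/2: it is at most 2^{−m} Σ_{x = m−C+1}^{C−1} binom(m, x). -/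
/-! The probability is the value at `p` of `∑ ν ∈ [a, m - a], B_{m,ν}` with `a = m - C + 1`,
where `B_{m,ν}` are the Bernstein polynomials. This sum is invariant under `p ↦ 1 - p`, and its
derivative telescopes to `m (B_{m-1,a-1} - B_{m-1,m-a})`, which is nonnegative on `[0, 1/2]`
since there `p ≤ 1 - p`. So the sum increases on `[0, 1/2]` and peaks at `p = 1/2`, where
`B_{m,ν} = binom(m, ν) / 2^m`. -/

open Finset Polynomial

namespace bernsteinPolynomial

theorem eval_tsub_le_eval_of_le_half {n ν : ℕ} (hν : 2 * ν ≤ n) {p : ℝ} (hp0 : 0 ≤ p)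
    (hp : p ≤ 1 / 2) :
    (bernsteinPolynomial ℝ n (n - ν)).eval p ≤ (bernsteinPolynomial ℝ n ν).eval p := by
  obtain ⟨d, rfl⟩ : ∃ d, n = 2 * ν + d := ⟨n - 2 * ν, by omega⟩
  have hd : p ^ d ≤ (1 - p) ^ d := pow_le_pow_left₀ hp0 (by linarith) d
  simp only [bernsteinPolynomial, eval_mul, eval_pow, eval_sub, eval_one, eval_X, eval_natCast,
    show 2 * ν + d - ν = ν + d by omega, show 2 * ν + d - (ν + d) = ν by omega,
    Nat.choose_symm_of_eq_add (show 2 * ν + d = (ν + d) + ν by ring)]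
  have hq : 0 ≤ 1 - p := by linarith
  calc (((2 * ν + d).choose ν : ℕ) : ℝ) * p ^ (ν + d) * (1 - p) ^ ν
      = (2 * ν + d).choose ν * p ^ ν * (1 - p) ^ ν * p ^ d := by ring
    _ ≤ (2 * ν + d).choose ν * p ^ ν * (1 - p) ^ ν * (1 - p) ^ d :=
      mul_le_mul_of_nonneg_left hd (by positivity)
    _ = (2 * ν + d).choose ν * p ^ ν * (1 - p) ^ (ν + d) := by ring

theorem eval_half (n ν : ℕ) :
    (bernsteinPolynomial ℝ n ν).eval (1 / 2) = n.choose ν / 2 ^ n := by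
  rcases le_or_gt ν n with h | h
  · simp only [bernsteinPolynomial, eval_mul, eval_pow, eval_sub, eval_one, eval_X, eval_natCast]
    rw [mul_assoc, show (1 : ℝ) - 1 / 2 = 1 / 2 by norm_num, ← pow_add, Nat.add_sub_cancel' h,
      one_div_pow, mul_one_div]
  · simp [eq_zero_of_lt ℝ h, Nat.choose_eq_zero_of_lt h]

theorem derivative_sum_Icc (R : Type*) [CommRing R] (n : ℕ) {k l : ℕ} (h : k ≤ l) :
    derivative (∑ ν ∈ Icc (k + 1) (l + 1), bernsteinPolynomial R n ν) =
      n * (bernsteinPolynomial R (n - 1) k - bernsteinPolynomial R (n - 1) (l + 1)) := by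
  rw [derivative_sum, ← map_add_right_Icc k l 1, sum_map]
  simp only [addRightEmbedding_apply, derivative_succ, ← mul_sum]
  rw [← neg_sub _ (bernsteinPolynomial R (n - 1) k), ← sum_Icc_sub h, ← sum_neg_distrib]
  simp only [neg_sub]

theorem eval_one_sub_sum_Icc (n a : ℕ) (p : ℝ) :
    (∑ ν ∈ Icc a (n - a), bernsteinPolynomial ℝ n ν).eval (1 - p) =
      (∑ ν ∈ Icc a (n - a), bernsteinPolynomial ℝ n ν).eval p := by
  simp only [eval_finsetSum]
  refine sum_nbij' (n - ·) (n - ·) ?_ ?_ ?_ ?_ ?_ <;> simp only [mem_Icc]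
  · omega
  · omega
  · omega
  · omega
  · intro ν hν
    rw [flip' ℝ n ν (by omega), eval_comp]
    simp

theorem monotoneOn_eval_sum_Icc {k l : ℕ} (h : k ≤ l) :
    MonotoneOn
      (fun p : ℝ => (∑ ν ∈ Icc (k + 1) (l + 1), bernsteinPolynomial ℝ (k + l + 2) ν).eval p)
      (Set.Icc 0 (1 / 2)) := by
  refine monotoneOn_of_deriv_nonneg (convex_Icc 0 (1 / 2)) (Polynomial.continuousOn _)
    (Polynomial.differentiableOn _) fun p hp => ?_
  rw [interior_Icc] at hp
  have hle := eval_tsub_le_eval_of_le_half (n := k + l + 1) (ν := k) (by omega) hp.1.le hp.2.le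
  rw [show k + l + 1 - k = l + 1 by omega] at hle
  rw [Polynomial.deriv, derivative_sum_Icc ℝ _ h]
  simp only [eval_mul, eval_sub, eval_natCast, show k + l + 2 - 1 = k + l + 1 by omega]
  exact mul_nonneg (Nat.cast_nonneg _) (sub_nonneg.2 hle)

theorem eval_sum_Icc_le_eval_half (n a : ℕ) {p : ℝ} (hp0 : 0 ≤ p) (hp1 : p ≤ 1) :
    (∑ ν ∈ Icc a (n - a), bernsteinPolynomial ℝ n ν).eval p ≤
      (∑ ν ∈ Icc a (n - a), bernsteinPolynomial ℝ n ν).eval (1 / 2) := by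
  wlog hp : p ≤ 1 / 2 generalizing p
  · rw [← eval_one_sub_sum_Icc]
    exact this (by linarith) (by linarith) (by linarith)
  rcases Nat.eq_zero_or_pos a with rfl | ha
  · simp [← Nat.range_succ_eq_Icc_zero, bernsteinPolynomial.sum]
  rcases lt_or_ge (n - a) a with hempty | hle
  · simp [Icc_eq_empty_of_lt hempty]
  obtain ⟨k, rfl⟩ : ∃ k, a = k + 1 := ⟨a - 1, by omega⟩
  obtain ⟨l, hl⟩ : ∃ l, n - (k + 1) = l + 1 := ⟨n - k - 2, by omega⟩
  obtain rfl : n = k + l + 2 := by omega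
  rw [hl]
  exact monotoneOn_eval_sum_Icc (by omega) ⟨hp0, hp⟩ (by norm_num) hp

end bernsteinPolynomial

theorem binomial_center_prob_le_half_general
    (C m : ℕ) (hCm : C ≤ m)
    (p : ℝ) (hp0 : 0 ≤ p) (hp1 : p ≤ 1) :
    ∑ x ∈ Finset.Icc (m - C + 1) (C - 1),
        (m.choose x : ℝ) * p ^ x * (1 - p) ^ (m - x) ≤
      (2 : ℝ) ^ (-(m : ℤ)) *
        ∑ x ∈ Finset.Icc (m - C + 1) (C - 1), (m.choose x : ℝ) := by
  have key := bernsteinPolynomial.eval_sum_Icc_le_eval_half m (m - C + 1) hp0 hp1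
  rw [show m - (m - C + 1) = C - 1 by omega] at key
  simp only [eval_finsetSum, bernsteinPolynomial.eval_half, ← sum_div] at key
  convert key using 1
  · simp [bernsteinPolynomial]
  · rw [zpow_neg, zpow_natCast, inv_mul_eq_div]

/-- Theorem: the probability that two bins sharing `m` objects are both non-full
is maximized at `p = 1/2`. For integers `C ≤ m ≤ 2(C - 1)` and `0 ≤ p ≤ 1`, with
`X ~ Binomial(m, p)`,
`P(m - C < X < C) = ∑_{x = m-C+1}^{C-1} binom(m, x) p^x (1-p)^{m-x}
  ≤ 2^{-m} ∑_{x = m-C+1}^{C-1} binom(m, x)`. -/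
theorem binomial_center_prob_le_half
    (C m : ℕ) (hCm : C ≤ m) (hm : m ≤ 2 * (C - 1))
    (p : ℝ) (hp0 : 0 ≤ p) (hp1 : p ≤ 1) :
    ∑ x ∈ Finset.Icc (m - C + 1) (C - 1),
        (m.choose x : ℝ) * p ^ x * (1 - p) ^ (m - x) ≤
      (2 : ℝ) ^ (-(m : ℤ)) *
        ∑ x ∈ Finset.Icc (m - C + 1) (C - 1), (m.choose x : ℝ) :=
  binomial_center_prob_le_half_general C m hCm p hp0 hp1
end

section
/- Let z ≥ 0 and C be integers with z < 2C, and let 0 < p < 1. For X ~ Binomial(z, p) and Y ~ Binomial(z, 1/2), the conditional second moments satisfy E[X² + (z − X)² | z − C < X < C] ≥ E[Y² + (z − Y)² | z − C < Y < C]; that is, the conditional mean of X_i² + X_j² for two bins sharing z objects, given that neither bin is full, is minimized by the uniform split p = 1/2. -/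
/-- The probability mass function of the Binomial(z, p) distribution. -/
def binomPmf (z : ℕ) (p : ℝ) (x : ℕ) : ℝ :=
  (z.choose x : ℝ) * p ^ x * (1 - p) ^ (z - x)

private lemma core_ineq (p q : ℝ) (hp : 0 ≤ p) (hq : 0 ≤ q) (b k n : ℕ) :
    p ^ (b + k + n) * q ^ (b + k) + p ^ (b + k) * q ^ (b + k + n) ≤
    p ^ (b + 2 * k + n) * q ^ b + p ^ b * q ^ (b + 2 * k + n) := by
  have h1 : (0:ℝ) ≤ p ^ b * q ^ b * ((p ^ (k + n) - q ^ (k + n)) * (p ^ k - q ^ k)) := by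
    apply mul_nonneg (mul_nonneg (pow_nonneg hp _) (pow_nonneg hq _))
    rcases le_total p q with h | h
    · nlinarith [pow_le_pow_left₀ hp h (k + n), pow_le_pow_left₀ hp h k]
    · nlinarith [pow_le_pow_left₀ hq h (k + n), pow_le_pow_left₀ hq h k]
  have e1 : b + k + n = b + (k + n) := by ring
  have e2 : b + 2 * k + n = b + (k + (k + n)) := by ring
  rw [e1, e2]
  simp only [pow_add] at h1 ⊢
  nlinarith [h1]

private lemma gmono' (p q : ℝ) (hp : 0 ≤ p) (hq : 0 ≤ q) (a b c d : ℕ)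
    (hs : a + b = c + d) (h1 : b ≤ d) (h2 : d ≤ c) :
    p ^ c * q ^ d + p ^ d * q ^ c ≤ p ^ a * q ^ b + p ^ b * q ^ a := by
  obtain ⟨k, rfl⟩ : ∃ k, d = b + k := ⟨d - b, by omega⟩
  obtain ⟨n, rfl⟩ : ∃ n, c = b + k + n := ⟨c - (b + k), by omega⟩
  obtain rfl : a = b + 2 * k + n := by omega
  exact core_ineq p q hp hq b k n

private lemma gmono (p q : ℝ) (hp : 0 ≤ p) (hq : 0 ≤ q) (z x y : ℕ)
    (hx : x ≤ z) (hy : y ≤ z)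
    (h : (2 * (y:ℤ) - z) ^ 2 ≤ (2 * (x:ℤ) - z) ^ 2) :
    p ^ y * q ^ (z - y) + p ^ (z - y) * q ^ y ≤ p ^ x * q ^ (z - x) + p ^ (z - x) * q ^ x := by
  have habs : (2 * (y:ℤ) - z).natAbs ≤ (2 * (x:ℤ) - z).natAbs := by
    have h2 := sq_le_sq.mp h
    rw [Int.abs_eq_natAbs, Int.abs_eq_natAbs] at h2
    omega
  rcases le_total x (z - x) with h1 | h1 <;> rcases le_total y (z - y) with h2 | h2
  · linarith [gmono' p q hp hq (z - x) x (z - y) y (by omega) (by omega) (by omega)]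
  · linarith [gmono' p q hp hq (z - x) x y (z - y) (by omega) (by omega) (by omega)]
  · linarith [gmono' p q hp hq x (z - x) (z - y) y (by omega) (by omega) (by omega)]
  · linarith [gmono' p q hp hq x (z - x) y (z - y) (by omega) (by omega) (by omega)]

private lemma sum_reflect (z : ℕ) (C : ℤ) (F : ℕ → ℝ) :
    ∑ x ∈ (Finset.range (z + 1)).filter
        (fun x : ℕ => (z : ℤ) - C < (x : ℤ) ∧ (x : ℤ) < C), F x
    = ∑ x ∈ (Finset.range (z + 1)).filter
        (fun x : ℕ => (z : ℤ) - C < (x : ℤ) ∧ (x : ℤ) < C), F (z - x) := by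
  apply Finset.sum_nbij' (i := fun x => z - x) (j := fun x => z - x) <;>
    intro a ha <;> simp only [Finset.mem_filter, Finset.mem_range] at ha ⊢ <;>
    first
      | omega
      | (rw [Nat.sub_sub_self (by omega)])

private lemma cheby (s : Finset ℕ) (f u W : ℕ → ℝ)
    (hmono : ∀ x ∈ s, ∀ y ∈ s, 0 ≤ (f x - f y) * (W x * u y - u x * W y)) :
    (∑ x ∈ s, f x * u x) * (∑ x ∈ s, W x) ≤ (∑ x ∈ s, f x * W x) * (∑ x ∈ s, u x) := by
  have key : 0 ≤ ∑ x ∈ s, ∑ y ∈ s, (f x - f y) * (W x * u y - u x * W y) :=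
    Finset.sum_nonneg fun x hx => Finset.sum_nonneg fun y hy => hmono x hx y hy
  have inner : ∀ x, ∑ y ∈ s, (f x - f y) * (W x * u y - u x * W y)
      = f x * W x * (∑ y ∈ s, u y) - f x * u x * (∑ y ∈ s, W y)
        - (∑ y ∈ s, f y * u y) * W x + (∑ y ∈ s, f y * W y) * u x := by
    intro x
    rw [Finset.mul_sum, Finset.mul_sum, Finset.sum_mul, Finset.sum_mul,
      ← Finset.sum_sub_distrib, ← Finset.sum_sub_distrib, ← Finset.sum_add_distrib]
    exact Finset.sum_congr rfl fun y _ => by ring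
  rw [Finset.sum_congr rfl fun x _ => inner x] at key
  rw [Finset.sum_add_distrib, Finset.sum_sub_distrib, Finset.sum_sub_distrib,
    ← Finset.sum_mul, ← Finset.sum_mul, ← Finset.mul_sum, ← Finset.mul_sum] at key
  linarith [key]

private lemma main_case (z : ℕ) (C : ℤ) (p : ℝ) (hp0 : 0 < p) (hp1 : p < 1) :
    (∑ x ∈ (Finset.range (z + 1)).filter
          (fun x : ℕ => (z : ℤ) - C < (x : ℤ) ∧ (x : ℤ) < C),
        ((x : ℝ) ^ 2 + ((z : ℝ) - x) ^ 2) * binomPmf z (1 / 2) x) *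
      (∑ x ∈ (Finset.range (z + 1)).filter
          (fun x : ℕ => (z : ℤ) - C < (x : ℤ) ∧ (x : ℤ) < C),
        binomPmf z p x) ≤
    (∑ x ∈ (Finset.range (z + 1)).filter
          (fun x : ℕ => (z : ℤ) - C < (x : ℤ) ∧ (x : ℤ) < C),
        ((x : ℝ) ^ 2 + ((z : ℝ) - x) ^ 2) * binomPmf z p x) *
      (∑ x ∈ (Finset.range (z + 1)).filter
          (fun x : ℕ => (z : ℤ) - C < (x : ℤ) ∧ (x : ℤ) < C),
        binomPmf z (1 / 2) x) := by
  set S := (Finset.range (z + 1)).filter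
      (fun x : ℕ => (z : ℤ) - C < (x : ℤ) ∧ (x : ℤ) < C) with hSdef
  set f : ℕ → ℝ := fun x : ℕ => (x : ℝ) ^ 2 + ((z : ℝ) - x) ^ 2 with hfdef
  set u : ℕ → ℝ := fun x : ℕ => binomPmf z (1 / 2) x with hudef
  set w : ℕ → ℝ := fun x : ℕ => binomPmf z p x with hwdef
  set W : ℕ → ℝ := fun x : ℕ => binomPmf z p x + binomPmf z p (z - x) with hWdef
  have hq0 : (0:ℝ) < 1 - p := by linarith
  have hx_le : ∀ x ∈ S, x ≤ z := by
    intro x hx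
    simp only [hSdef, Finset.mem_filter, Finset.mem_range] at hx
    omega
  have hfsym : ∀ x ∈ S, f (z - x) = f x := by
    intro x hx
    have hxz := hx_le x hx
    simp only [hfdef]
    rw [Nat.cast_sub hxz]
    ring
  -- closed forms
  have hwrefl : ∀ a, a ≤ z → binomPmf z p (z - a)
      = (z.choose a : ℝ) * p ^ (z - a) * (1 - p) ^ a := by
    intro a ha
    unfold binomPmf
    rw [Nat.choose_symm ha, Nat.sub_sub_self ha]
  have huval : ∀ a, a ≤ z → u a = (z.choose a : ℝ) * (1 / 2) ^ z := by
    intro a ha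
    simp only [hudef]
    unfold binomPmf
    have h12 : (1 - 1 / 2 : ℝ) = 1 / 2 := by norm_num
    rw [h12, mul_assoc, ← pow_add, Nat.add_sub_cancel' ha]
  -- monotonicity
  have hmain : ∀ a ∈ S, ∀ b ∈ S, f b ≤ f a → u a * W b ≤ W a * u b := by
    intro a ha b hb hfle
    have haz := hx_le a ha
    have hbz := hx_le b hb
    have hsq : (2 * (b : ℤ) - z) ^ 2 ≤ (2 * (a : ℤ) - z) ^ 2 := by
      have hre : ((2 * (b : ℤ) - z : ℤ) : ℝ) ^ 2 ≤ ((2 * (a : ℤ) - z : ℤ) : ℝ) ^ 2 := by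
        push_cast
        simp only [hfdef] at hfle
        nlinarith [hfle]
      exact_mod_cast hre
    have hg := gmono p (1 - p) hp0.le (by linarith) z a b haz hbz hsq
    have hc : (0:ℝ) ≤ (z.choose a : ℝ) * (z.choose b : ℝ) * (1 / 2) ^ z := by positivity
    rw [huval a haz, huval b hbz]
    simp only [hWdef]
    rw [hwrefl a haz, hwrefl b hbz]
    unfold binomPmf
    nlinarith [mul_le_mul_of_nonneg_left hg hc]
  have hmono : ∀ x ∈ S, ∀ y ∈ S, 0 ≤ (f x - f y) * (W x * u y - u x * W y) := by
    intro x hx y hy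
    rcases le_total (f x) (f y) with hle | hle
    · have h2 := hmain y hy x hx hle
      nlinarith [mul_nonneg (sub_nonneg.mpr hle) (sub_nonneg.mpr h2)]
    · have h2 := hmain x hx y hy hle
      nlinarith [mul_nonneg (sub_nonneg.mpr hle) (sub_nonneg.mpr h2)]
  have key : (∑ x ∈ S, f x * u x) * (∑ x ∈ S, W x)
      ≤ (∑ x ∈ S, f x * W x) * (∑ x ∈ S, u x) := cheby S f u W hmono
  -- doubling identities
  have hrefl : ∀ F : ℕ → ℝ, (∑ x ∈ S, F x) = ∑ x ∈ S, F (z - x) := by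
    intro F
    rw [hSdef]
    exact sum_reflect z C F
  have hfw_swap : (∑ x ∈ S, f x * w (z - x)) = ∑ x ∈ S, f x * w x := by
    rw [show (∑ x ∈ S, f x * w x) = ∑ x ∈ S, f (z - x) * w (z - x) from
      hrefl (fun t => f t * w t)]
    exact Finset.sum_congr rfl fun x hx => by rw [hfsym x hx]
  have hfW : (∑ x ∈ S, f x * W x) = 2 * ∑ x ∈ S, f x * w x := by
    simp only [hWdef, hwdef] at hfw_swap ⊢
    simp only [mul_add, Finset.sum_add_distrib]
    rw [hfw_swap]
    ring
  have hWw : (∑ x ∈ S, W x) = 2 * ∑ x ∈ S, w x := by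
    simp only [hWdef, hwdef]
    rw [Finset.sum_add_distrib, ← hrefl (fun t => binomPmf z p t)]
    ring
  rw [hfW, hWw] at key
  have goal_eq1 : (∑ x ∈ S, ((x : ℝ) ^ 2 + ((z : ℝ) - x) ^ 2) * binomPmf z (1 / 2) x)
      = ∑ x ∈ S, f x * u x := rfl
  have goal_eq2 : (∑ x ∈ S, ((x : ℝ) ^ 2 + ((z : ℝ) - x) ^ 2) * binomPmf z p x)
      = ∑ x ∈ S, f x * w x := rfl
  have goal_eq3 : (∑ x ∈ S, binomPmf z p x) = ∑ x ∈ S, w x := rfl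
  have goal_eq4 : (∑ x ∈ S, binomPmf z (1 / 2) x) = ∑ x ∈ S, u x := rfl
  rw [goal_eq1, goal_eq2, goal_eq3, goal_eq4]
  linarith [key]

/-- Theorem: the conditional mean of `X² + (z - X)²` for two bins sharing `z`
objects, given that neither bin is full (`z - C < X < C`), is minimized by the
uniform split. For `X ~ Binomial(z, p)` and `Y ~ Binomial(z, 1/2)` with
`z < 2C` and `0 < p < 1`,
`E[X² + (z - X)² ∣ z - C < X < C] ≥ E[Y² + (z - Y)² ∣ z - C < Y < C]`. -/
theorem binomial_cond_second_moment_ge_uniform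
    (z : ℕ) (C : ℤ) (hzC : (z : ℤ) < 2 * C) (p : ℝ) (hp0 : 0 < p) (hp1 : p < 1) :
    (∑ x ∈ (Finset.range (z + 1)).filter
          (fun x : ℕ => (z : ℤ) - C < (x : ℤ) ∧ (x : ℤ) < C),
        ((x : ℝ) ^ 2 + ((z : ℝ) - x) ^ 2) * binomPmf z p x) /
      (∑ x ∈ (Finset.range (z + 1)).filter
          (fun x : ℕ => (z : ℤ) - C < (x : ℤ) ∧ (x : ℤ) < C),
        binomPmf z p x) ≥
    (∑ x ∈ (Finset.range (z + 1)).filter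
          (fun x : ℕ => (z : ℤ) - C < (x : ℤ) ∧ (x : ℤ) < C),
        ((x : ℝ) ^ 2 + ((z : ℝ) - x) ^ 2) * binomPmf z (1 / 2) x) /
      (∑ x ∈ (Finset.range (z + 1)).filter
          (fun x : ℕ => (z : ℤ) - C < (x : ℤ) ∧ (x : ℤ) < C),
        binomPmf z (1 / 2) x) := by
  set S := (Finset.range (z + 1)).filter
      (fun x : ℕ => (z : ℤ) - C < (x : ℤ) ∧ (x : ℤ) < C) with hSdef
  rcases S.eq_empty_or_nonempty with he | hne
  · rw [he]
    simp
  · have hx_le : ∀ x ∈ S, x ≤ z := by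
      intro x hx
      simp only [hSdef, Finset.mem_filter, Finset.mem_range] at hx
      omega
    have hpos : ∀ (r : ℝ), 0 < r → r < 1 → 0 < ∑ x ∈ S, binomPmf z r x := by
      intro r hr0 hr1
      apply Finset.sum_pos _ hne
      intro x hx
      unfold binomPmf
      apply mul_pos (mul_pos _ (pow_pos hr0 _)) (pow_pos (by linarith) _)
      exact_mod_cast Nat.choose_pos (hx_le x hx)
    have hwpos := hpos p hp0 hp1
    have hupos := hpos (1 / 2) (by norm_num) (by norm_num)
    rw [ge_iff_le, div_le_div_iff₀ hupos hwpos]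
    exact main_case z C p hp0 hp1
end

section
/- Let z ≥ 0 be an integer and 0 ≤ p ≤ 1. Let X ~ Binomial(z, p) and Y ~ Binomial(z, 1/2), and set X* = max(X, z − X) and Y* = max(Y, z − Y). Then X* stochastically dominates Y*: for every real c, P(X* ≥ c) ≥ P(Y* ≥ c). -/
open Polynomial Finset

noncomputable def binomTail (R : Type*) [CommRing R] (n m : ℕ) : R[X] :=
  ∑ ν ∈ Ico m (n + 1), bernsteinPolynomial R n ν

section

variable {R : Type*} [CommRing R]

theorem sum_eval_bernsteinPolynomial (n : ℕ) (x : R) :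
    ∑ ν ∈ range (n + 1), (bernsteinPolynomial R n ν).eval x = 1 := by
  rw [← eval_finsetSum, bernsteinPolynomial.sum, eval_one]

theorem sum_filter_le_eval_bernsteinPolynomial (n m : ℕ) (x : R) :
    ∑ ν ∈ (range (n + 1)).filter (m ≤ ·), (bernsteinPolynomial R n ν).eval x =
      (binomTail R n m).eval x := by
  rw [binomTail, eval_finsetSum]
  congr 1
  ext ν
  simp only [mem_filter, mem_range, mem_Ico]
  omega

theorem sum_filter_le_sub_eval_bernsteinPolynomial (n m : ℕ) (x : R) :
    ∑ ν ∈ (range (n + 1)).filter (fun ν => m ≤ n - ν),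
        (bernsteinPolynomial R n ν).eval x =
      (binomTail R n m).eval (1 - x) := by
  rw [binomTail, eval_finsetSum]
  refine sum_nbij' (n - ·) (n - ·) ?_ ?_ ?_ ?_ ?_ <;> intro ν hν <;>
    simp only [mem_filter, mem_range, mem_Ico] at hν ⊢
  any_goals omega
  rw [bernsteinPolynomial.flip' R n ν (by omega), eval_comp]
  simp

theorem sum_filter_le_or_le_sub_eval_bernsteinPolynomial {n m : ℕ} (hnm : n < 2 * m) (x : R) :
    ∑ ν ∈ (range (n + 1)).filter (fun ν => m ≤ ν ∨ m ≤ n - ν),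
        (bernsteinPolynomial R n ν).eval x =
      (binomTail R n m).eval x + (binomTail R n m).eval (1 - x) := by
  classical
  have hdisj : Disjoint ((range (n + 1)).filter (m ≤ ·))
      ((range (n + 1)).filter (fun ν => m ≤ n - ν)) := by
    rw [disjoint_filter]
    intro ν hν
    simp only [mem_range] at hν
    omega
  rw [filter_or, sum_union hdisj, sum_filter_le_eval_bernsteinPolynomial,
    sum_filter_le_sub_eval_bernsteinPolynomial]

theorem derivative_binomTail (n k : ℕ) :
    derivative (binomTail R n (k + 1)) = n * bernsteinPolynomial R (n - 1) k := by
  rcases le_or_gt k n with hkn | hnk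
  · rw [binomTail, ← sum_Ico_add', derivative_sum]
    have htelescope : ∑ i ∈ Ico k n, (bernsteinPolynomial R (n - 1) i -
        bernsteinPolynomial R (n - 1) (i + 1)) =
          bernsteinPolynomial R (n - 1) k - bernsteinPolynomial R (n - 1) n := by
      simpa only [neg_sub_neg] using sum_Ico_sub (fun i => -bernsteinPolynomial R (n - 1) i) hkn
    simp only [bernsteinPolynomial.derivative_succ, ← mul_sum, htelescope]
    rcases n.eq_zero_or_pos with rfl | hn
    · simp only [Nat.cast_zero, zero_mul]
    · rw [bernsteinPolynomial.eq_zero_of_lt R (show n - 1 < n by omega), sub_zero]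
  · rw [binomTail, Ico_eq_empty (by omega), sum_empty, derivative_zero,
      bernsteinPolynomial.eq_zero_of_lt R (by omega), mul_zero]

theorem derivative_binomTail_add_comp_one_sub (n k : ℕ) :
    derivative (binomTail R n (k + 1) + (binomTail R n (k + 1)).comp (1 - X)) =
      n * (bernsteinPolynomial R (n - 1) k - (bernsteinPolynomial R (n - 1) k).comp (1 - X)) := by
  simp only [derivative_add, derivative_comp, derivative_binomTail, derivative_sub, derivative_one,
    derivative_X, mul_comp, natCast_comp]
  ring

theorem pow_mul_pow_le_pow_mul_pow_s13 [PartialOrder R] [IsOrderedRing R] {a b : ℕ} (hab : a ≤ b)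
    {x y : R} (hx : 0 ≤ x) (hxy : x ≤ y) : x ^ b * y ^ a ≤ y ^ b * x ^ a := by
  obtain ⟨d, rfl⟩ := Nat.exists_eq_add_of_le hab
  have hy : 0 ≤ y := hx.trans hxy
  calc x ^ (a + d) * y ^ a = (x ^ a * y ^ a) * x ^ d := by ring
    _ ≤ (x ^ a * y ^ a) * y ^ d := by gcongr
    _ = y ^ (a + d) * x ^ a := by ring

theorem eval_one_sub_bernsteinPolynomial_le [PartialOrder R] [IsOrderedRing R] {n k : ℕ}
    (hnk : n ≤ 2 * k) {x : R} (hx₀ : 0 ≤ 1 - x) (hx : 1 - x ≤ x) :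
    (bernsteinPolynomial R n k).eval (1 - x) ≤ (bernsteinPolynomial R n k).eval x := by
  simp only [bernsteinPolynomial, eval_mul, eval_natCast, eval_pow, eval_sub, eval_one, eval_X,
    sub_sub_cancel, mul_assoc]
  gcongr ?_ * ?_
  exact pow_mul_pow_le_pow_mul_pow_s13 (by omega) hx₀ hx

end

theorem monotoneOn_eval_binomTail_add_eval_one_sub {n m : ℕ} (hnm : n < 2 * m) :
    MonotoneOn (fun x : ℝ => (binomTail ℝ n m).eval x + (binomTail ℝ n m).eval (1 - x))
      (Set.Icc (1 / 2) 1) := by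
  obtain ⟨k, rfl⟩ : ∃ k, m = k + 1 := ⟨m - 1, by omega⟩
  set Q := binomTail ℝ n (k + 1) + (binomTail ℝ n (k + 1)).comp (1 - X)
  have hQ : ∀ x, Q.eval x =
      (binomTail ℝ n (k + 1)).eval x + (binomTail ℝ n (k + 1)).eval (1 - x) := by
    simp [Q, eval_comp]
  simp only [← hQ]
  refine monotoneOn_of_deriv_nonneg (convex_Icc _ _) Q.continuousOn Q.differentiableOn
    fun x hx => ?_
  rw [interior_Icc] at hx
  rw [Q.deriv, derivative_binomTail_add_comp_one_sub]
  simp only [eval_mul, eval_natCast, eval_sub, eval_comp, eval_one, eval_X]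
  exact mul_nonneg n.cast_nonneg <| sub_nonneg.2 <|
    eval_one_sub_bernsteinPolynomial_le (by omega) (by linarith [hx.2]) (by linarith [hx.1])

theorem eval_binomTail_add_eval_one_sub_half_le {n m : ℕ} (hnm : n < 2 * m) {x : ℝ}
    (hx₀ : 0 ≤ x) (hx₁ : x ≤ 1) :
    (binomTail ℝ n m).eval (1 / 2) + (binomTail ℝ n m).eval (1 - 1 / 2) ≤
      (binomTail ℝ n m).eval x + (binomTail ℝ n m).eval (1 - x) := by
  have hmono := monotoneOn_eval_binomTail_add_eval_one_sub hnm
  have hhalf : (1 / 2 : ℝ) ∈ Set.Icc (1 / 2) 1 := by norm_num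
  rcases le_total (1 / 2) x with hx | hx
  · exact hmono hhalf ⟨hx, hx₁⟩ hx
  · have h := hmono hhalf (show 1 - x ∈ Set.Icc (1 / 2) 1 from ⟨by linarith, by linarith⟩)
      (by linarith)
    simp only [sub_sub_cancel] at h
    linarith

theorem sum_filter_le_or_le_sub_eval_half_le (n m : ℕ) {p : ℝ} (hp₀ : 0 ≤ p) (hp₁ : p ≤ 1) :
    ∑ ν ∈ (range (n + 1)).filter (fun ν => m ≤ ν ∨ m ≤ n - ν),
        (bernsteinPolynomial ℝ n ν).eval (1 / 2) ≤
      ∑ ν ∈ (range (n + 1)).filter (fun ν => m ≤ ν ∨ m ≤ n - ν),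
        (bernsteinPolynomial ℝ n ν).eval p := by
  by_cases hnm : n < 2 * m
  · simp only [sum_filter_le_or_le_sub_eval_bernsteinPolynomial hnm]
    exact eval_binomTail_add_eval_one_sub_half_le hnm hp₀ hp₁
  · rw [filter_true_of_mem fun ν hν => by simp only [mem_range] at hν; omega,
      sum_eval_bernsteinPolynomial, sum_eval_bernsteinPolynomial]

theorem binomPmf_eq_eval_bernsteinPolynomial (z : ℕ) (p : ℝ) (x : ℕ) :
    binomPmf z p x = (bernsteinPolynomial ℝ z x).eval p := by
  simp [binomPmf, bernsteinPolynomial]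

theorem le_max_natCast_sub_iff_ceil_le {n x : ℕ} (hx : x ≤ n) (c : ℝ) :
    c ≤ max (x : ℝ) (n - x) ↔ ⌈c⌉₊ ≤ x ∨ ⌈c⌉₊ ≤ n - x := by
  rw [le_max_iff, ← Nat.cast_sub hx, Nat.ceil_le, Nat.ceil_le]

/-- Theorem: for `X ~ Binomial(z, p)` and `Y ~ Binomial(z, 1/2)`, the load of
the more loaded bin `X* = max(X, z - X)` stochastically dominates
`Y* = max(Y, z - Y)`: for every real `c`, `P(X* ≥ c) ≥ P(Y* ≥ c)`. -/
theorem binomial_max_stochastically_dominates_uniform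
    (z : ℕ) (p : ℝ) (hp0 : 0 ≤ p) (hp1 : p ≤ 1) (c : ℝ) :
    ∑ x ∈ (Finset.range (z + 1)).filter
        (fun x : ℕ => c ≤ max (x : ℝ) ((z : ℝ) - x)),
      binomPmf z p x ≥
    ∑ x ∈ (Finset.range (z + 1)).filter
        (fun x : ℕ => c ≤ max (x : ℝ) ((z : ℝ) - x)),
      binomPmf z (1 / 2) x := by
  have hevent : (range (z + 1)).filter (fun x : ℕ => c ≤ max (x : ℝ) ((z : ℝ) - x)) =
      (range (z + 1)).filter (fun x => ⌈c⌉₊ ≤ x ∨ ⌈c⌉₊ ≤ z - x) :=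
    filter_congr fun x hx =>
      le_max_natCast_sub_iff_ceil_le (Nat.lt_succ_iff.mp (mem_range.mp hx)) c
  simp only [hevent, binomPmf_eq_eval_bernsteinPolynomial]
  exact sum_filter_le_or_le_sub_eval_half_le z ⌈c⌉₊ hp0 hp1
end

section
/- Let z ≥ 0 be an integer, 0 < p < 1, and C an integer with z/2 < C. Let X ~ Binomial(z, p) and Y ~ Binomial(z, 1/2), and set X* = max(X, z − X) and Y* = max(Y, z − Y). Then conditionally on being below capacity, X* still stochastically dominates Y*: for every real c, P(X* ≥ c | X* < C) ≥ P(Y* ≥ c | Y* < C). In particular, E[g(X*) | X* < C] ≥ E[g(Y*) | Y* < C] for every nondecreasing function g on {⌈z/2⌉, ..., z}. -/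
namespace BinomCondDom

/-- `φ(m) = p^m q^(z-m) + p^(z-m) q^m`, proportional to the pmf of
`max(X, z-X)` divided by the binomial coefficient. -/
noncomputable def phi (z : ℕ) (p : ℝ) (m : ℕ) : ℝ :=
  p ^ m * (1 - p) ^ (z - m) + p ^ (z - m) * (1 - p) ^ m

lemma phi_symm (z : ℕ) (p : ℝ) {x : ℕ} (hx : x ≤ z) : phi z p (z - x) = phi z p x := by
  unfold phi
  rw [Nat.sub_sub_self hx]
  ring

lemma phi_step (z : ℕ) (p : ℝ) (hp0 : 0 < p) (hp1 : p < 1) {k : ℕ}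
    (hk : (z + 1) / 2 ≤ k) (hk2 : k + 1 ≤ z) :
    phi z p k ≤ phi z p (k + 1) := by
  set q := 1 - p with hq
  have hq0 : 0 < q := by simp [hq]; linarith
  obtain ⟨j, hj⟩ : ∃ j, z - (k + 1) = j := ⟨_, rfl⟩
  have h1 : z - k = j + 1 := by omega
  obtain ⟨d, hd⟩ : ∃ d, k = j + d := ⟨k - j, by omega⟩
  have key : 0 ≤ (p - q) * (p ^ d - q ^ d) := by
    rcases le_total p q with h | h
    · have h2 : p ^ d ≤ q ^ d := pow_le_pow_left₀ hp0.le h d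
      nlinarith
    · have h2 : q ^ d ≤ p ^ d := pow_le_pow_left₀ hq0.le h d
      nlinarith
  have hpj : 0 < p ^ j := pow_pos hp0 j
  have hqj : 0 < q ^ j := pow_pos hq0 j
  unfold phi
  rw [hj, h1, hd]
  have expand : p ^ (j + d + 1) * q ^ j + p ^ j * q ^ (j + d + 1)
      - (p ^ (j + d) * q ^ (j + 1) + p ^ (j + 1) * q ^ (j + d))
      = (p ^ j * q ^ j) * ((p - q) * (p ^ d - q ^ d)) := by
    ring
  nlinarith [mul_nonneg (mul_pos hpj hqj).le key]

lemma phi_mono (z : ℕ) (p : ℝ) (hp0 : 0 < p) (hp1 : p < 1) {m n : ℕ}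
    (h1 : (z + 1) / 2 ≤ m) (hmn : m ≤ n) (hn : n ≤ z) : phi z p m ≤ phi z p n := by
  induction n, hmn using Nat.le_induction with
  | base => exact le_refl _
  | succ n hmn ih =>
      exact le_trans (ih (by omega)) (phi_step z p hp0 hp1 (by omega) hn)

lemma binomPmf_pos (z : ℕ) (p : ℝ) (hp0 : 0 < p) (hp1 : p < 1) {x : ℕ} (hx : x ≤ z) :
    0 < binomPmf z p x := by
  unfold binomPmf
  have h1 : (0 : ℝ) < (z.choose x : ℝ) := by exact_mod_cast Nat.choose_pos hx
  have h2 : (0 : ℝ) < 1 - p := by linarith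
  positivity

lemma binom_half (z : ℕ) {x : ℕ} (hx : x ≤ z) :
    binomPmf z (1 / 2) x = (z.choose x : ℝ) * (1 / 2) ^ z := by
  unfold binomPmf
  rw [show (1 - (1 : ℝ) / 2) = 1 / 2 by norm_num, mul_assoc, ← pow_add,
    Nat.add_sub_cancel' hx]

lemma abar_eq (z : ℕ) (p : ℝ) {x : ℕ} (hx : x ≤ z) :
    binomPmf z p x + binomPmf z p (z - x) = (z.choose x : ℝ) * phi z p x := by
  unfold binomPmf phi
  rw [Nat.choose_symm hx, Nat.sub_sub_self hx]
  ring

lemma phi_max (z : ℕ) (p : ℝ) {x : ℕ} (hx : x ≤ z) :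
    phi z p (max x (z - x)) = phi z p x := by
  rcases le_total (z - x) x with h | h
  · rw [max_eq_left h]
  · rw [max_eq_right h, phi_symm z p hx]

section core

variable (z : ℕ) (p : ℝ) (C : ℤ)

/-- The below-capacity index set. -/
def S (z : ℕ) (C : ℤ) : Finset ℕ :=
  (Finset.range (z + 1)).filter (fun x : ℕ => max (x : ℤ) ((z : ℤ) - (x : ℤ)) < C)

lemma mem_S {x : ℕ} : x ∈ S z C ↔ x ≤ z ∧ max (x : ℤ) ((z : ℤ) - (x : ℤ)) < C := by
  simp [S, Finset.mem_filter, Nat.lt_succ_iff]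

lemma reflect_mem {x : ℕ} (hx : x ∈ S z C) : z - x ∈ S z C := by
  rw [mem_S] at hx ⊢
  obtain ⟨h1, h2⟩ := hx
  refine ⟨by omega, ?_⟩
  have : ((z - x : ℕ) : ℤ) = (z : ℤ) - (x : ℤ) := by omega
  rw [this]
  omega

lemma sum_reflect (f : ℕ → ℝ) :
    ∑ x ∈ S z C, f x = ∑ x ∈ S z C, f (z - x) := by
  refine Finset.sum_nbij' (fun x => z - x) (fun x => z - x) ?_ ?_ ?_ ?_ ?_
  · intro a ha; exact reflect_mem z C ha
  · intro a ha; exact reflect_mem z C ha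
  · intro a ha
    have : a ≤ z := ((mem_S z C).1 ha).1
    omega
  · intro a ha
    have : a ≤ z := ((mem_S z C).1 ha).1
    omega
  · intro a ha
    have : a ≤ z := ((mem_S z C).1 ha).1
    congr 1
    omega

lemma max_reflect {x : ℕ} (hx : x ≤ z) :
    max (z - x) (z - (z - x)) = max x (z - x) := by omega

/-- Core cross-multiplication inequality. -/
lemma core (hp0 : 0 < p) (hp1 : p < 1) (g : ℕ → ℝ)
    (hg : ∀ a b : ℕ, (z + 1) / 2 ≤ a → a ≤ b → b ≤ z → g a ≤ g b) :
    (∑ x ∈ S z C, g (max x (z - x)) * binomPmf z (1 / 2) x) *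
      (∑ x ∈ S z C, binomPmf z p x) ≤
    (∑ x ∈ S z C, g (max x (z - x)) * binomPmf z p x) *
      (∑ x ∈ S z C, binomPmf z (1 / 2) x) := by
  set a : ℕ → ℝ := binomPmf z p with ha
  set b : ℕ → ℝ := binomPmf z (1 / 2) with hb
  set ab : ℕ → ℝ := fun x => a x + a (z - x) with hab
  have hle : ∀ x ∈ S z C, x ≤ z := fun x hx => ((mem_S z C).1 hx).1
  -- reflection identities
  have hrefl1 : ∑ x ∈ S z C, g (max x (z - x)) * a x = ∑ x ∈ S z C, g (max x (z - x)) * a (z - x) := by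
    rw [sum_reflect z C (fun x => g (max x (z - x)) * a x)]
    refine Finset.sum_congr rfl fun x hx => ?_
    have hxz := hle x hx
    have : max (z - x) (z - (z - x)) = max x (z - x) := by omega
    rw [this]
  have hrefl2 : ∑ x ∈ S z C, a x = ∑ x ∈ S z C, a (z - x) :=
    sum_reflect z C a
  have h1 : 2 * ∑ x ∈ S z C, g (max x (z - x)) * a x = ∑ x ∈ S z C, g (max x (z - x)) * ab x := by
    simp only [hab, mul_add, Finset.sum_add_distrib]
    rw [← hrefl1]; ring
  have h2 : 2 * ∑ x ∈ S z C, a x = ∑ x ∈ S z C, ab x := by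
    simp only [hab, Finset.sum_add_distrib]
    rw [← hrefl2]; ring
  -- it suffices to prove the version with `ab`
  have key : (∑ x ∈ S z C, g (max x (z - x)) * b x) * (∑ x ∈ S z C, ab x) ≤
      (∑ x ∈ S z C, g (max x (z - x)) * ab x) * (∑ x ∈ S z C, b x) := by
    rw [Finset.sum_mul_sum, Finset.sum_mul_sum]
    rw [← sub_nonneg, ← Finset.sum_sub_distrib]
    simp only [← Finset.sum_sub_distrib]
    set F : ℕ → ℕ → ℝ := fun x y => g (max x (z - x)) * ab x * b y - g (max x (z - x)) * b x * ab y with hF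
    have hcomm : ∑ x ∈ S z C, ∑ y ∈ S z C, F x y = ∑ x ∈ S z C, ∑ y ∈ S z C, F y x :=
      Finset.sum_comm
    have hpt : ∀ x ∈ S z C, ∀ y ∈ S z C, 0 ≤ F x y + F y x := by
      intro x hx y hy
      have hxz := hle x hx
      have hyz := hle y hy
      have habx : ab x = (z.choose x : ℝ) * phi z p (max x (z - x)) := by
        rw [hab]; simp only; rw [abar_eq z p hxz, phi_max z p hxz]
      have haby : ab y = (z.choose y : ℝ) * phi z p (max y (z - y)) := by
        rw [hab]; simp only; rw [abar_eq z p hyz, phi_max z p hyz]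
      have hbx : b x = (z.choose x : ℝ) * (1 / 2) ^ z := binom_half z hxz
      have hby : b y = (z.choose y : ℝ) * (1 / 2) ^ z := binom_half z hyz
      have heq : F x y + F y x =
          (z.choose x : ℝ) * (z.choose y : ℝ) * (1 / 2) ^ z *
            ((g (max x (z - x)) - g (max y (z - y))) * (phi z p (max x (z - x)) - phi z p (max y (z - y)))) := by
        rw [hF]; simp only
        rw [habx, haby, hbx, hby]; ring
      rw [heq]
      have hcx : (0 : ℝ) ≤ (z.choose x : ℝ) := by positivity
      have hcy : (0 : ℝ) ≤ (z.choose y : ℝ) := by positivity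
      have hpow : (0 : ℝ) ≤ (1 / 2 : ℝ) ^ z := by positivity
      have hvx1 : (z + 1) / 2 ≤ max x (z - x) := by omega
      have hvx2 : max x (z - x) ≤ z := by omega
      have hvy1 : (z + 1) / 2 ≤ max y (z - y) := by omega
      have hvy2 : max y (z - y) ≤ z := by omega
      have hsgn : 0 ≤ (g (max x (z - x)) - g (max y (z - y))) * (phi z p (max x (z - x)) - phi z p (max y (z - y))) := by
        rcases le_total (max x (z - x)) (max y (z - y)) with h | h
        · have hg1 : g (max x (z - x)) ≤ g (max y (z - y)) := hg _ _ hvx1 h hvy2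
          have hphi : phi z p (max x (z - x)) ≤ phi z p (max y (z - y)) := phi_mono z p hp0 hp1 hvx1 h hvy2
          nlinarith
        · have hg1 : g (max y (z - y)) ≤ g (max x (z - x)) := hg _ _ hvy1 h hvx2
          have hphi : phi z p (max y (z - y)) ≤ phi z p (max x (z - x)) := phi_mono z p hp0 hp1 hvy1 h hvx2
          nlinarith
      positivity
    have hsum2 : 0 ≤ ∑ x ∈ S z C, ∑ y ∈ S z C, (F x y + F y x) := by
      refine Finset.sum_nonneg fun x hx => Finset.sum_nonneg fun y hy => hpt x hx y hy
    have hsplit : ∑ x ∈ S z C, ∑ y ∈ S z C, (F x y + F y x)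
        = (∑ x ∈ S z C, ∑ y ∈ S z C, F x y) + ∑ x ∈ S z C, ∑ y ∈ S z C, F y x := by
      simp [Finset.sum_add_distrib]
    rw [hsplit, ← hcomm] at hsum2
    linarith
  rw [← h1, ← h2] at key
  nlinarith [key]

/-- The general conditional-expectation comparison. -/
lemma main_aux (hp0 : 0 < p) (hp1 : p < 1) (g : ℕ → ℝ)
    (hg : ∀ a b : ℕ, (z + 1) / 2 ≤ a → a ≤ b → b ≤ z → g a ≤ g b) :
    (∑ x ∈ S z C, g (max x (z - x)) * binomPmf z p x) /
      (∑ x ∈ S z C, binomPmf z p x) ≥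
    (∑ x ∈ S z C, g (max x (z - x)) * binomPmf z (1 / 2) x) /
      (∑ x ∈ S z C, binomPmf z (1 / 2) x) := by
  rcases Finset.eq_empty_or_nonempty (S z C) with hS | hS
  · simp [hS]
  · have hle : ∀ x ∈ S z C, x ≤ z := fun x hx => ((mem_S z C).1 hx).1
    have hda : 0 < ∑ x ∈ S z C, binomPmf z p x :=
      Finset.sum_pos (fun x hx => binomPmf_pos z p hp0 hp1 (hle x hx)) hS
    have hdb : 0 < ∑ x ∈ S z C, binomPmf z (1 / 2) x :=
      Finset.sum_pos (fun x hx => binomPmf_pos z (1 / 2) (by norm_num) (by norm_num)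
        (hle x hx)) hS
    rw [ge_iff_le, div_le_div_iff₀ hdb hda]
    exact core z p C hp0 hp1 g hg

end core

end BinomCondDom

/-- Theorem: for `X ~ Binomial(z, p)` (with `0 < p < 1`) and
`Y ~ Binomial(z, 1/2)`, setting `X* = max(X, z - X)` and `Y* = max(Y, z - Y)`,
and a capacity `C > z/2`, conditionally on being below capacity `X*` still
stochastically dominates `Y*`: `P(X* ≥ c ∣ X* < C) ≥ P(Y* ≥ c ∣ Y* < C)` for
every real `c`; and `E[g(X*) ∣ X* < C] ≥ E[g(Y*) ∣ Y* < C]` for every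
nondecreasing function `g` on `{⌈z/2⌉, ..., z}`. -/
theorem binomial_max_cond_stochastically_dominates_uniform
    (z : ℕ) (p : ℝ) (hp0 : 0 < p) (hp1 : p < 1) (C : ℤ) (hC : (z : ℝ) / 2 < C) :
    (∀ c : ℝ,
      (∑ x ∈ (Finset.range (z + 1)).filter
            (fun x : ℕ => c ≤ max (x : ℝ) ((z : ℝ) - x) ∧
              max (x : ℤ) ((z : ℤ) - (x : ℤ)) < C),
          binomPmf z p x) /
        (∑ x ∈ (Finset.range (z + 1)).filter
            (fun x : ℕ => max (x : ℤ) ((z : ℤ) - (x : ℤ)) < C),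
          binomPmf z p x) ≥
      (∑ x ∈ (Finset.range (z + 1)).filter
            (fun x : ℕ => c ≤ max (x : ℝ) ((z : ℝ) - x) ∧
              max (x : ℤ) ((z : ℤ) - (x : ℤ)) < C),
          binomPmf z (1 / 2) x) /
        (∑ x ∈ (Finset.range (z + 1)).filter
            (fun x : ℕ => max (x : ℤ) ((z : ℤ) - (x : ℤ)) < C),
          binomPmf z (1 / 2) x)) ∧
    (∀ g : ℕ → ℝ,
      (∀ a b : ℕ, (z + 1) / 2 ≤ a → a ≤ b → b ≤ z → g a ≤ g b) →
      (∑ x ∈ (Finset.range (z + 1)).filter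
            (fun x : ℕ => max (x : ℤ) ((z : ℤ) - (x : ℤ)) < C),
          g (max x (z - x)) * binomPmf z p x) /
        (∑ x ∈ (Finset.range (z + 1)).filter
            (fun x : ℕ => max (x : ℤ) ((z : ℤ) - (x : ℤ)) < C),
          binomPmf z p x) ≥
      (∑ x ∈ (Finset.range (z + 1)).filter
            (fun x : ℕ => max (x : ℤ) ((z : ℤ) - (x : ℤ)) < C),
          g (max x (z - x)) * binomPmf z (1 / 2) x) /
        (∑ x ∈ (Finset.range (z + 1)).filter
            (fun x : ℕ => max (x : ℤ) ((z : ℤ) - (x : ℤ)) < C),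
          binomPmf z (1 / 2) x)) := by
  constructor
  · intro c
    -- rewrite the doubly-filtered sums as `g`-weighted sums over `S z C`
    set g : ℕ → ℝ := fun m => if c ≤ (m : ℝ) then (1 : ℝ) else 0 with hgdef
    have hg : ∀ a b : ℕ, (z + 1) / 2 ≤ a → a ≤ b → b ≤ z → g a ≤ g b := by
      intro a b _ hab _
      simp only [hgdef]
      split_ifs with h1 h2
      · exact le_rfl
      · exact absurd (le_trans h1 (by exact_mod_cast Nat.cast_le.2 hab)) h2
      · norm_num
      · exact le_rfl
    have hfilter : ∀ q : ℝ,
        (∑ x ∈ (Finset.range (z + 1)).filter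
            (fun x : ℕ => c ≤ max (x : ℝ) ((z : ℝ) - x) ∧
              max (x : ℤ) ((z : ℤ) - (x : ℤ)) < C),
          binomPmf z q x)
        = ∑ x ∈ BinomCondDom.S z C, g (max x (z - x)) * binomPmf z q x := by
      intro q
      have hset : (Finset.range (z + 1)).filter
            (fun x : ℕ => c ≤ max (x : ℝ) ((z : ℝ) - x) ∧
              max (x : ℤ) ((z : ℤ) - (x : ℤ)) < C)
          = (BinomCondDom.S z C).filter (fun x : ℕ => c ≤ max (x : ℝ) ((z : ℝ) - x)) := by
        unfold BinomCondDom.S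
        rw [Finset.filter_filter]
        apply Finset.filter_congr
        intro x _
        constructor <;> (intro h; exact ⟨h.2, h.1⟩)
      rw [hset, Finset.sum_filter]
      refine Finset.sum_congr rfl fun x hx => ?_
      have hxz : x ≤ z := ((BinomCondDom.mem_S z C).1 hx).1
      have hcast : max (x : ℝ) ((z : ℝ) - x) = ((max x (z - x) : ℕ) : ℝ) := by
        rw [Nat.cast_max, Nat.cast_sub hxz]
      rw [hcast]
      simp only [hgdef]
      split_ifs with h
      · ring
      · ring
    rw [hfilter p, hfilter (1 / 2)]
    exact BinomCondDom.main_aux z p C hp0 hp1 g hg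
  · intro g hg
    exact BinomCondDom.main_aux z p C hp0 hp1 g hg
end

section
/- Let K ≥ 2 be an integer and set θ = 1/(K − 1). Let U, V be identically distributed square-integrable real random variables on a probability space with common variance v = Var(U) = Var(V) and Cov(U, V) = −v/(K − 1), and let Δ be a {0,1}-valued random variable with P(Δ = 1) = θ, independent of the pair (U, V). Then Var(U + Δ·V) ≥ (1 + θ − 2θ²)·v = (1 + 1/(K − 1) − 2/(K − 1)²)·Var(U). -/
/-!
With `p = 𝔼[Δ]`, independence of `Δ` from `(U, V)` and `Δ² = Δ` give
`Var(U + ΔV) = Var U + p Var V + 2p Cov(U, V) + p(1 - p) 𝔼[V]²`;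
the last term is nonnegative since `p = θ ∈ [0, 1]`.
-/

open MeasureTheory ProbabilityTheory

namespace ProbabilityTheory

variable {Ω : Type*} [MeasurableSpace Ω] {P : Measure Ω} {X Y Δ U V : Ω → ℝ}

lemma integral_eq_measureReal_of_eq_zero_or_one (hΔ : Measurable Δ)
    (h01 : ∀ ω, Δ ω = 0 ∨ Δ ω = 1) : P[Δ] = P.real {ω | Δ ω = 1} := by
  have hind : Δ = {ω | Δ ω = 1}.indicator 1 := by
    funext ω
    rcases h01 ω with h | h <;> simp [h]
  conv_lhs => rw [hind]
  exact integral_indicator_one (hΔ (measurableSet_singleton 1))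

lemma IndepFun.memLp_two_mul (h : X ⟂ᵢ[P] Y) (hX : MemLp X 2 P) (hY : MemLp Y 2 P) :
    MemLp (fun ω ↦ X ω * Y ω) 2 P := by
  refine (memLp_two_iff_integrable_sq
    (hX.aestronglyMeasurable.mul hY.aestronglyMeasurable)).2 ?_
  simp only [Pi.mul_apply, mul_pow]
  exact (h.comp (measurable_id.pow_const 2) (measurable_id.pow_const 2)).integrable_mul
    hX.integrable_sq hY.integrable_sq

variable [IsProbabilityMeasure P]

lemma memLp_two_of_eq_zero_or_one (hΔ : Measurable Δ) (h01 : ∀ ω, Δ ω = 0 ∨ Δ ω = 1) :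
    MemLp Δ 2 P :=
  MemLp.of_bound hΔ.aestronglyMeasurable 1 <| .of_forall fun ω ↦ by
    rcases h01 ω with h | h <;> simp [h]

lemma IndepFun.variance_mul (h : X ⟂ᵢ[P] Y) (hX : MemLp X 2 P) (hY : MemLp Y 2 P) :
    Var[fun ω ↦ X ω * Y ω; P] = P[fun ω ↦ X ω ^ 2] * Var[Y; P] + Var[X; P] * P[Y] ^ 2 := by
  have hsq : ∫ ω, (X ω * Y ω) ^ 2 ∂P = P[fun ω ↦ X ω ^ 2] * P[fun ω ↦ Y ω ^ 2] := by
    simp_rw [mul_pow]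
    exact (h.comp (measurable_id.pow_const 2) (measurable_id.pow_const 2))
      |>.integral_fun_mul_eq_mul_integral hX.integrable_sq.aestronglyMeasurable
        hY.integrable_sq.aestronglyMeasurable
  have hmean := h.integral_fun_mul_eq_mul_integral hX.aestronglyMeasurable hY.aestronglyMeasurable
  rw [variance_eq_sub (h.memLp_two_mul hX hY), variance_eq_sub hX, variance_eq_sub hY]
  simp only [Pi.pow_apply]
  rw [hsq, hmean]
  ring

lemma IndepFun.covariance_mul_right (h : Δ ⟂ᵢ[P] fun ω ↦ (U ω, V ω)) (hΔ : MemLp Δ 2 P)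
    (hU : MemLp U 2 P) (hV : MemLp V 2 P) :
    cov[U, fun ω ↦ Δ ω * V ω; P] = P[Δ] * cov[U, V; P] := by
  have hΔV : Δ ⟂ᵢ[P] V := h.comp measurable_id measurable_snd
  have hΔUV : Δ ⟂ᵢ[P] fun ω ↦ U ω * V ω :=
    h.comp measurable_id (measurable_fst.mul measurable_snd)
  have hmean :=
    hΔV.integral_fun_mul_eq_mul_integral hΔ.aestronglyMeasurable hV.aestronglyMeasurable
  have hmixed : ∫ ω, U ω * (Δ ω * V ω) ∂P = P[Δ] * ∫ ω, U ω * V ω ∂P := by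
    simp_rw [mul_left_comm (U _)]
    exact hΔUV.integral_fun_mul_eq_mul_integral hΔ.aestronglyMeasurable
      (hU.integrable_mul hV).aestronglyMeasurable
  rw [covariance_eq_sub hU (hΔV.memLp_two_mul hΔ hV), covariance_eq_sub hU hV]
  simp only [Pi.mul_apply]
  rw [hmixed, hmean]
  ring

theorem variance_add_mul_of_eq_zero_or_one (hΔ : Measurable Δ) (h01 : ∀ ω, Δ ω = 0 ∨ Δ ω = 1)
    (h : Δ ⟂ᵢ[P] fun ω ↦ (U ω, V ω)) (hU : MemLp U 2 P) (hV : MemLp V 2 P) :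
    Var[fun ω ↦ U ω + Δ ω * V ω; P] =
      Var[U; P] + P[Δ] * Var[V; P] + 2 * P[Δ] * cov[U, V; P] + P[Δ] * (1 - P[Δ]) * P[V] ^ 2 := by
  have hΔ2 : MemLp Δ 2 P := memLp_two_of_eq_zero_or_one hΔ h01
  have hΔV : Δ ⟂ᵢ[P] V := h.comp measurable_id measurable_snd
  have hsq : (fun ω ↦ Δ ω ^ 2) = Δ := funext fun ω ↦ by
    rcases h01 ω with h0 | h1 <;> simp [*]
  have hvarΔ : Var[Δ; P] = P[Δ] * (1 - P[Δ]) := by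
    rw [variance_eq_sub hΔ2, Pi.pow_def, hsq]
    ring
  rw [variance_fun_add hU (hΔV.memLp_two_mul hΔ2 hV), hΔV.variance_mul hΔ2 hV,
    h.covariance_mul_right hΔ2 hU hV, hsq, hvarΔ]
  ring

end ProbabilityTheory

theorem variance_add_bernoulli_mul_ge_general
    {Ω : Type*} [MeasurableSpace Ω] (P : Measure Ω) [IsProbabilityMeasure P]
    (K : ℕ) (hK : 2 ≤ K) (θ v : ℝ) (hθ : θ = 1 / ((K : ℝ) - 1))
    (Δ U V : Ω → ℝ)
    (hU : MemLp U 2 P) (hV : MemLp V 2 P)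
    (hvarU : variance U P = v) (hvarV : variance V P = v)
    (hcov : (∫ ω, U ω * V ω ∂P) - (∫ ω, U ω ∂P) * (∫ ω, V ω ∂P) =
      -v / ((K : ℝ) - 1))
    (hΔmeas : Measurable Δ)
    (hΔ01 : ∀ ω, Δ ω = 0 ∨ Δ ω = 1)
    (hΔ : P {ω | Δ ω = 1} = ENNReal.ofReal θ)
    (hindep : IndepFun Δ (fun ω => (U ω, V ω)) P) :
    variance (fun ω => U ω + Δ ω * V ω) P ≥ (1 + θ - 2 * θ ^ 2) * v ∧
    variance (fun ω => U ω + Δ ω * V ω) P ≥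
      (1 + 1 / ((K : ℝ) - 1) - 2 / ((K : ℝ) - 1) ^ 2) * variance U P := by
  have hK1 : (1 : ℝ) ≤ (K : ℝ) - 1 := by
    have : (2 : ℝ) ≤ K := by exact_mod_cast hK
    linarith
  have hθ0 : 0 ≤ θ := by rw [hθ]; positivity
  have hθ1 : θ ≤ 1 := by rw [hθ]; exact div_le_one_of_le₀ hK1 (by linarith)
  have hmean : P[Δ] = θ := by
    rw [integral_eq_measureReal_of_eq_zero_or_one hΔmeas hΔ01, measureReal_def, hΔ,
      ENNReal.toReal_ofReal hθ0]
  have hcovθ : cov[U, V; P] = -(θ * v) := by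
    rw [covariance_eq_sub hU hV, hθ]
    simpa [neg_div, div_eq_inv_mul] using hcov
  have hlower : (1 + θ - 2 * θ ^ 2) * v ≤ variance (fun ω => U ω + Δ ω * V ω) P := by
    rw [variance_add_mul_of_eq_zero_or_one hΔmeas hΔ01 hindep hU hV, hmean, hcovθ, hvarU, hvarV]
    linarith [mul_nonneg (mul_nonneg hθ0 (sub_nonneg.2 hθ1)) (sq_nonneg P[V])]
  refine ⟨hlower, ?_⟩
  have hcoeff : 1 + 1 / ((K : ℝ) - 1) - 2 / ((K : ℝ) - 1) ^ 2 = 1 + θ - 2 * θ ^ 2 := by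
    rw [hθ]; field_simp
  rwa [hcoeff, hvarU]

/-- Variance growth for CH-BL assignment probabilities: let `K ≥ 2`,
`θ = 1/(K - 1)`, let `U, V` be identically distributed square-integrable random
variables with common variance `v` and `Cov(U, V) = -v/(K - 1)`, and let `Δ` be
a Bernoulli(θ) variable independent of the pair `(U, V)`. Then
`Var(U + Δ·V) ≥ (1 + θ - 2θ²)·v = (1 + 1/(K-1) - 2/(K-1)²)·Var(U)`. -/
theorem variance_add_bernoulli_mul_ge
    {Ω : Type*} [MeasurableSpace Ω] (P : Measure Ω) [IsProbabilityMeasure P]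
    (K : ℕ) (hK : 2 ≤ K) (θ v : ℝ) (hθ : θ = 1 / ((K : ℝ) - 1))
    (Δ U V : Ω → ℝ)
    (hU : MemLp U 2 P) (hV : MemLp V 2 P)
    (hid : IdentDistrib U V P P)
    (hvarU : variance U P = v) (hvarV : variance V P = v)
    (hcov : (∫ ω, U ω * V ω ∂P) - (∫ ω, U ω ∂P) * (∫ ω, V ω ∂P) =
      -v / ((K : ℝ) - 1))
    (hΔmeas : Measurable Δ)
    (hΔ01 : ∀ ω, Δ ω = 0 ∨ Δ ω = 1)
    (hΔ : P {ω | Δ ω = 1} = ENNReal.ofReal θ)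
    (hindep : IndepFun Δ (fun ω => (U ω, V ω)) P) :
    variance (fun ω => U ω + Δ ω * V ω) P ≥ (1 + θ - 2 * θ ^ 2) * v ∧
    variance (fun ω => U ω + Δ ω * V ω) P ≥
      (1 + 1 / ((K : ℝ) - 1) - 2 / ((K : ℝ) - 1) ^ 2) * variance U P :=
  variance_add_bernoulli_mul_ge_general P K hK θ v hθ Δ U V hU hV hvarU hvarV hcov hΔmeas hΔ01 hΔ
    hindep
end
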